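/- arXiv:1011.2844 — 4 statements merged into one kernel-verified Lean document; each statement's English description precedes it below -/
import Mathlib

section
/- Liao's sifting lemma (function version): Let X be a compact metric space, f : X → X a continuous map, and φ : X → ℝ a continuous strictly positive function. Assume: (1) there is a point b ∈ X with ∏_{k=0}^{n-1} φ(f^k b) ≥ 1 for all n ≥ 1; (2) there are constants λ₁, λ₂ with 0 < λ₁ < λ₂ < 1 such that every point x ∈ X satisfying ∏_{k=0}^{n-1} φ(f^k x) ≥ λ₂^n for all n ≥ 1 has a point c ∈ ω(x) with ∏_{k=0}^{n-1} φ(f^k c) ≤ λ₁^n for all n ≥ 1. Then for every λ₃ ∈ (λ₂, 1) and every l ∈ ℕ there exist positive integers n₁ < n₂ < ⋯ < n_l such that for every j ∈ {1,…,l−1} and every k with n_j + 1 ≤ k ≤ n_{j+1}, one has ∏_{i=n_j}^{k-1} φ(f^i b) ≤ λ₃^{k-n_j} and ∏_{i=k-1}^{n_{j+1}-1} φ(f^i b) ≥ λ₂^{n_{j+1}-k+1}. -/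
/-!
Put `T m = ∑_{i<m} log (φ (f^i b) / λ₂)`. By (1), `T m ≥ m log (1/λ₂) → ∞`, so `T` has infinitely
many record times `r 0 < r 1 < ⋯` (times `m` with `T k ≤ T m` for all `k ≤ m`), and every record
time `m` is `λ₂`-expanding from the right: `∏_{i=k}^{m-1} φ(f^i b) ≥ λ₂^(m-k)`.

Long gaps between consecutive records occur in every window of bounded length. Otherwise there
are arbitrarily long windows in which records are at most `G` steps apart. With
`log (φ / λ₂) ≤ K`, the Birkhoff sums from the start of such a window are then at least `-G K`,
and so are those of a limit point `y` of the window starts. Starting at a near-minimiser of the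
Birkhoff sums of `y` and passing to a limit gives `z` in the orbit closure of `y` whose sums are
all `≥ 0`, so (2) gives `c ∈ ω(z)` whose first `G` sums are negative. That property is open, so
the orbit of `b` has it at some time inside a long window, although a record follows within `G`
steps.

Along the records, `σ i = T (r i) - β r i` with `β = log (λ₃/λ₂)` rises by at most `K` per step
and drops by `β` times each gap. A gap longer than `(F + 1) K / β` after a running maximum `q` of
`σ` keeps `σ ≤ σ q` on the next `F + 1` indices, so by induction on `l` a window of bounded length
contains indices `s 0 < s 1 < ⋯` with `σ ≤ σ (s j)` on `(s j, s (j+1)]`. The records `r (s j)` are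
then also `λ₃`-contracting from the left up to the next one.
-/

open Filter Topology Finset Function

def omegaSet {X : Type*} [TopologicalSpace X] (f : X → X) (x : X) : Set X :=
  {y | ∃ n : ℕ → ℕ, Filter.Tendsto n Filter.atTop Filter.atTop ∧
    Filter.Tendsto (fun k => f^[n k] x) Filter.atTop (nhds y)}

section Records

variable {α : Type*} [LinearOrder α] (T : ℕ → α)

def IsRecordTime (m : ℕ) : Prop := ∀ k ≤ m, T k ≤ T m

noncomputable def recordTime : ℕ → ℕ := Nat.nth (IsRecordTime T)

variable {T}

lemma exists_isRecordTime_le (k : ℕ) : ∃ m ≤ k, IsRecordTime T m ∧ ∀ j ≤ k, T j ≤ T m := by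
  obtain ⟨m, hm, hmax⟩ := (range (k + 1)).exists_max_image T ⟨k, self_mem_range_succ k⟩
  have hmk : m ≤ k := Nat.lt_succ_iff.1 (mem_range.1 hm)
  have hle : ∀ j ≤ k, T j ≤ T m := fun j hj => hmax j (mem_range_succ_iff.2 hj)
  exact ⟨m, hmk, fun j hj => hle j (hj.trans hmk), hle⟩

lemma infinite_setOf_isRecordTime (hT : ¬BddAbove (Set.range T)) :
    (Set.ofPred (IsRecordTime T)).Infinite := by
  refine Set.infinite_of_forall_exists_gt fun u => ?_
  obtain ⟨p, -, -, hp⟩ := exists_isRecordTime_le (T := T) u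
  obtain ⟨n, hn⟩ : ∃ n, T p < T n := by
    simp only [bddAbove_def, Set.forall_mem_range, not_exists, not_forall, not_le] at hT
    exact hT (T p)
  obtain ⟨m, -, hm, hnm⟩ := exists_isRecordTime_le (T := T) n
  refine ⟨m, hm, lt_of_not_ge fun hmu => ?_⟩
  exact (hn.trans_le (hnm n le_rfl)).not_ge (hp m hmu)

lemma recordTime_zero : recordTime T 0 = 0 :=
  Nat.nth_zero_of_zero fun k hk => by rw [Nat.le_zero.1 hk]

lemma recordTime_strictMono (hT : ¬BddAbove (Set.range T)) : StrictMono (recordTime T) :=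
  Nat.nth_strictMono (infinite_setOf_isRecordTime hT)

lemma isRecordTime_recordTime (hT : ¬BddAbove (Set.range T)) (i : ℕ) :
    IsRecordTime T (recordTime T i) :=
  Nat.nth_mem_of_infinite (infinite_setOf_isRecordTime hT) i

lemma le_recordTime_of_le (hT : ¬BddAbove (Set.range T)) {i k : ℕ} (hk : k ≤ recordTime T i) :
    T k ≤ T (recordTime T i) :=
  isRecordTime_recordTime hT i k hk

lemma le_recordTime_of_lt_succ (hT : ¬BddAbove (Set.range T)) {i k : ℕ}
    (hk : k < recordTime T (i + 1)) : T k ≤ T (recordTime T i) := by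
  obtain ⟨m, hmk, hm, hkm⟩ := exists_isRecordTime_le (T := T) k
  exact (hkm k le_rfl).trans <| le_recordTime_of_le hT <|
    Nat.le_nth_of_lt_nth_succ (hmk.trans_lt hk) hm

lemma exists_recordTime_le_lt (hT : ¬BddAbove (Set.range T)) (k : ℕ) :
    ∃ i, recordTime T i ≤ k ∧ k < recordTime T (i + 1) := by
  have hr := recordTime_strictMono hT
  induction k with
  | zero => exact ⟨0, by rw [recordTime_zero], by simpa [recordTime_zero] using hr zero_lt_one⟩
  | succ k ih =>
    obtain ⟨i, hik, hki⟩ := ih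
    rcases (Order.add_one_le_of_lt hki).eq_or_lt with h | h
    · exact ⟨i + 1, h.ge, by rw [h]; exact hr (lt_add_one _)⟩
    · exact ⟨i, by omega, h⟩

lemma exists_recordTime_gap_gt (hT : ¬BddAbove (Set.range T)) {G Z : ℕ}
    (hwin : ∀ a, ∃ u ∈ Ico a (a + Z), ∀ n ∈ Icc 1 G, ¬IsRecordTime T (u + n)) (I : ℕ) :
    ∃ t ∈ Ico I (I + Z), G < recordTime T (t + 1) - recordTime T t := by
  have hr := recordTime_strictMono hT
  obtain ⟨u, hu, hfree⟩ := hwin (recordTime T I)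
  obtain ⟨t, htu, hut⟩ := exists_recordTime_le_lt hT u
  rw [mem_Ico] at hu
  refine ⟨t, mem_Ico.2 ⟨?_, ?_⟩, ?_⟩
  · by_contra! h
    exact (hut.trans_le (hr.monotone h)).not_ge hu.1
  · have := hr.add_le_nat Z I
    exact hr.lt_iff_lt.1 (by rw [add_comm I]; omega)
  · by_contra! h
    refine hfree (recordTime T (t + 1) - u) (mem_Icc.2 ⟨by omega, by omega⟩) ?_
    rw [Nat.add_sub_cancel' hut.le]
    exact isRecordTime_recordTime hT (t + 1)

end Records

section RealRecords

variable {T : ℕ → ℝ}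

lemma recordTime_succ_le_add (hT : ¬BddAbove (Set.range T)) {K : ℝ}
    (hinc : ∀ m, T (m + 1) ≤ T m + K) (i : ℕ) :
    T (recordTime T (i + 1)) ≤ T (recordTime T i) + K := by
  obtain ⟨m, hm⟩ := Nat.exists_eq_add_one_of_ne_zero
    ((Nat.zero_le _).trans_lt (recordTime_strictMono hT (lt_add_one i))).ne'
  rw [hm]
  linarith [hinc m, le_recordTime_of_lt_succ hT (i := i) (k := m) (by omega)]

lemma sub_mul_le_of_forall_mem_Ioc (hT : ¬BddAbove (Set.range T)) {β : ℝ}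
    (hβ : 0 ≤ β) {s₀ s₁ : ℕ}
    (hstair : ∀ t ∈ Ioc s₀ s₁,
      T (recordTime T t) - recordTime T t * β ≤ T (recordTime T s₀) - recordTime T s₀ * β)
    {k : ℕ} (hk : k ∈ Ioc (recordTime T s₀) (recordTime T s₁)) :
    T k - k * β ≤ T (recordTime T s₀) - recordTime T s₀ * β := by
  have hr := recordTime_strictMono hT
  rw [mem_Ioc] at hk
  obtain ⟨m, hmk, hkm⟩ := exists_recordTime_le_lt hT k
  have hσ : T k - k * β ≤ T (recordTime T m) - recordTime T m * β := by
    have hmβ : (recordTime T m : ℝ) * β ≤ k * β :=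
      mul_le_mul_of_nonneg_right (by exact_mod_cast hmk) hβ
    linarith [le_recordTime_of_lt_succ hT hkm]
  have hs₀m : s₀ ≤ m := Nat.lt_succ_iff.1 (hr.lt_iff_lt.1 (hk.1.trans hkm))
  rcases hs₀m.eq_or_lt with rfl | h
  · exact hσ
  · exact hσ.trans (hstair m (mem_Ioc.2 ⟨h, hr.le_iff_le.1 (hmk.trans hk.2)⟩))

end RealRecords

section Staircase

variable {σ : ℕ → ℝ} {C : ℝ}

lemma le_add_mul_of_forall_succ_le (hstep : ∀ i, σ (i + 1) ≤ σ i + C) (i d : ℕ) :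
    σ (i + d) ≤ σ i + d * C := by
  induction d with
  | zero => simp
  | succ d ih =>
    rw [← add_assoc]
    push_cast
    linarith [hstep (i + d)]

variable {g : ℕ → ℕ} {β : ℝ}

lemma le_add_mul_sub_of_lt (hβ : 0 ≤ β) (hstep : ∀ i, σ (i + 1) ≤ σ i + C - g i * β)
    {q t t' : ℕ} (hqt : q ≤ t) (htt' : t < t') :
    σ t' ≤ σ q + (t' - q : ℕ) * C - g t * β := by
  have hup : ∀ i, σ (i + 1) ≤ σ i + C := fun i => by
    linarith [hstep i, mul_nonneg (Nat.cast_nonneg (g i)) hβ]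
  obtain ⟨e, rfl⟩ := Nat.exists_eq_add_of_le hqt
  obtain ⟨d, rfl⟩ := Nat.exists_eq_add_of_lt htt'
  have h₁ := le_add_mul_of_forall_succ_le hup (q + e + 1) d
  have h₂ := le_add_mul_of_forall_succ_le hup q e
  rw [show q + e + d + 1 - q = e + 1 + d by omega, show q + e + d + 1 = q + e + 1 + d by ring]
  push_cast
  linarith [hstep (q + e)]

theorem exists_staircase (hβ : 0 < β) (hC : 0 ≤ C)
    (hstep : ∀ i, σ (i + 1) ≤ σ i + C - g i * β)
    (hgap : ∀ G : ℕ, ∃ Z, ∀ I, ∃ t ∈ Ico I (I + Z), G < g t) (L : ℕ) :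
    ∃ F, ∀ I, ∃ s : ℕ → ℕ, StrictMono s ∧ I ≤ s 0 ∧ s 0 ≤ I + F ∧
      ∀ j, j + 1 < L → ∀ t ∈ Ioc (s j) (s (j + 1)), σ t ≤ σ (s j) := by
  induction L with
  | zero => exact ⟨0, fun I => ⟨(I + ·), strictMono_id.const_add I, le_rfl, le_rfl, by simp⟩⟩
  | succ L ih =>
    obtain ⟨F, hF⟩ := ih
    obtain ⟨Z, hZ⟩ := hgap ⌈(F + 1) * C / β⌉₊
    refine ⟨Z, fun I => ?_⟩
    obtain ⟨t, ht, hgt⟩ := hZ I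
    rw [mem_Ico] at ht
    obtain ⟨q, hq, hqmax⟩ := (Icc I t).exists_max_image σ ⟨I, left_mem_Icc.2 ht.1⟩
    rw [mem_Icc] at hq
    -- up to `t` by maximality of `q`; beyond `t` the gap `g t` outweighs `F + 1` rises by `C`
    have hdrop : ∀ t' ∈ Ioc q (q + 1 + F), σ t' ≤ σ q := by
      intro t' ht'
      rw [mem_Ioc] at ht'
      rcases le_or_gt t' t with h | h
      · exact hqmax t' (mem_Icc.2 ⟨by omega, h⟩)
      have hlong : (F + 1) * C < g t * β := by
        rw [← div_lt_iff₀ hβ]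
        exact (Nat.le_ceil _).trans_lt (by exact_mod_cast hgt)
      have hdist : ((t' - q : ℕ) : ℝ) * C ≤ (F + 1) * C :=
        mul_le_mul_of_nonneg_right (by exact_mod_cast (by omega : t' - q ≤ F + 1)) hC
      linarith [le_add_mul_sub_of_lt hβ.le hstep hq.2 h]
    obtain ⟨s, hs, hs0, hs0F, hstair⟩ := hF (q + 1)
    refine ⟨fun | 0 => q | j + 1 => s j, strictMono_nat_of_lt_succ ?_, hq.1,
      show q ≤ I + Z by omega, ?_⟩
    · rintro (_ | j)
      exacts [hs0, hs (lt_add_one j)]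
    · rintro (_ | j) hj t' ht'
      · exact hdrop t' (Ioc_subset_Ioc_right (by omega) ht')
      · exact hstair j (by omega) t' ht'

end Staircase

section BirkhoffSum

variable {X : Type*} {f : X → X}

lemma birkhoffSum_le_mul {g : X → ℝ} {K : ℝ} (hgK : ∀ x, g x ≤ K) (n : ℕ) (x : X) :
    birkhoffSum f g n x ≤ n * K := by
  have := Finset.sum_le_card_nsmul (range n) _ K fun k _ => hgK (f^[k] x)
  simpa [birkhoffSum] using this

variable {ψ : X → ℝ} {b : X}

lemma birkhoffSum_nonneg_of_isRecordTime {u n : ℕ}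
    (h : IsRecordTime (fun m => birkhoffSum f ψ m b) (u + n)) :
    0 ≤ birkhoffSum f ψ n (f^[u] b) := by
  have := h u (Nat.le_add_right u n)
  simp only [birkhoffSum_add] at this
  linarith

lemma neg_mul_le_birkhoffSum_of_isRecordTime {K : ℝ} (hψK : ∀ x, ψ x ≤ K) (hK : 0 ≤ K)
    {a n m G : ℕ} (hm : m ≤ G) (h : IsRecordTime (fun m => birkhoffSum f ψ m b) (a + n + m)) :
    -(G * K) ≤ birkhoffSum f ψ n (f^[a] b) := by
  have hrec := h a (by omega)
  have hmK : (m : ℝ) * K ≤ G * K := mul_le_mul_of_nonneg_right (by exact_mod_cast hm) hK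
  simp only [birkhoffSum_add] at hrec
  linarith [birkhoffSum_le_mul (f := f) hψK m (f^[a + n] b)]

end BirkhoffSum

section Dynamics

variable {X : Type*} [TopologicalSpace X] {f : X → X}

lemma continuous_birkhoffSum (hf : Continuous f) {g : X → ℝ} (hg : Continuous g) (n : ℕ) :
    Continuous (birkhoffSum f g n) :=
  continuous_finsetSum _ fun k _ => hg.comp (hf.iterate k)

lemma omegaSet_subset_closure_range (x : X) :
    omegaSet f x ⊆ closure (Set.range fun n => f^[n] x) :=
  fun _ ⟨_, _, hy⟩ =>
    mem_closure_of_tendsto hy (Eventually.of_forall fun _ => Set.mem_range_self _)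

lemma exists_iterate_mem_of_mem_closure_range (hf : Continuous f) {U : Set X} (hU : IsOpen U)
    {x y : X} (hx : x ∈ closure (Set.range fun n => f^[n] y)) {p : ℕ} (hxU : f^[p] x ∈ U) :
    ∃ m, f^[m] y ∈ U := by
  obtain ⟨_, hmU, m, rfl⟩ := mem_closure_iff.1 hx _ ((hf.iterate p).isOpen_preimage U hU) hxU
  exact ⟨p + m, by rwa [iterate_add_apply]⟩

lemma exists_mem_closure_range_forall_birkhoffSum_nonneg [SeqCompactSpace X] (hf : Continuous f)
    {g : X → ℝ} (hg : Continuous g) {y : X}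
    (hy : BddBelow (Set.range fun n => birkhoffSum f g n y)) :
    ∃ z ∈ closure (Set.range fun n => f^[n] y), ∀ n, 0 ≤ birkhoffSum f g n z := by
  set E := fun n => birkhoffSum f g n y
  obtain ⟨v, -, hv, hvE⟩ := exists_seq_tendsto_sInf (Set.range_nonempty E) hy
  choose m hm using hvE
  obtain ⟨z, θ, hθ, hz⟩ := SeqCompactSpace.tendsto_subseq fun k => f^[m k] y
  refine ⟨z, mem_closure_of_tendsto hz (Eventually.of_forall fun _ => Set.mem_range_self _),
    fun n => ?_⟩
  -- the times `m k` nearly minimise `E`, so no sum along the orbit after them is very negative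
  have hlow : ∀ k, sInf (Set.range E) - v k ≤ birkhoffSum f g n (f^[m k] y) := fun k => by
    have := csInf_le hy ⟨m k + n, rfl⟩
    simp only [E, birkhoffSum_add, ← hm k] at this ⊢
    linarith
  have h0 : Tendsto (fun k => sInf (Set.range E) - v (θ k)) atTop (𝓝 0) := by
    rw [← sub_self (sInf (Set.range E))]
    exact (tendsto_const_nhds.sub hv).comp hθ.tendsto_atTop
  exact le_of_tendsto_of_tendsto' h0 (((continuous_birkhoffSum hf hg n).tendsto z).comp hz)
    fun k => hlow (θ k)

variable {ψ : X → ℝ}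

theorem exists_window_not_isRecordTime [SeqCompactSpace X] (hf : Continuous f)
    (hψ : Continuous ψ) {K : ℝ} (hψK : ∀ x, ψ x ≤ K) (hK : 0 ≤ K)
    (hneg : ∀ x, (∀ n, 0 ≤ birkhoffSum f ψ n x) →
      ∃ c ∈ omegaSet f x, ∀ n, 1 ≤ n → birkhoffSum f ψ n c < 0) (b : X) (G : ℕ) :
    ∃ Z, ∀ a, ∃ u ∈ Ico a (a + Z), ∀ n ∈ Icc 1 G,
      ¬IsRecordTime (fun m => birkhoffSum f ψ m b) (u + n) := by
  by_contra! h
  choose a ha using h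
  have hlow : ∀ Z, ∀ n < Z, -(G * K) ≤ birkhoffSum f ψ n (f^[a Z] b) := by
    intro Z n hn
    obtain ⟨m, hm, hrec⟩ := ha Z (a Z + n) (mem_Ico.2 ⟨by omega, by omega⟩)
    exact neg_mul_le_birkhoffSum_of_isRecordTime hψK hK (mem_Icc.1 hm).2 hrec
  obtain ⟨y, θ, hθ, hy⟩ := SeqCompactSpace.tendsto_subseq fun Z => f^[a Z] b
  have hy_low : ∀ n, -(G * K) ≤ birkhoffSum f ψ n y := fun n =>
    ge_of_tendsto (((continuous_birkhoffSum hf hψ n).tendsto y).comp hy)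
      ((eventually_gt_atTop n).mono fun j hj => hlow _ n (hj.trans_le hθ.le_apply))
  obtain ⟨z, hzy, hz⟩ :=
    exists_mem_closure_range_forall_birkhoffSum_nonneg hf hψ ⟨_, Set.forall_mem_range.2 hy_low⟩
  obtain ⟨c, hcz, hc⟩ := hneg z hz
  set U : Set X := ⋂ n ∈ Icc 1 G, {x | birkhoffSum f ψ n x < 0}
  have hU : IsOpen U :=
    isOpen_biInter_finset fun n _ => isOpen_lt (continuous_birkhoffSum hf hψ n) continuous_const
  have hcU : f^[0] c ∈ U := Set.mem_iInter₂.2 fun n hn => hc n (mem_Icc.1 hn).1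
  obtain ⟨p, hp⟩ :=
    exists_iterate_mem_of_mem_closure_range hf hU (omegaSet_subset_closure_range z hcz) hcU
  obtain ⟨M, hM⟩ := exists_iterate_mem_of_mem_closure_range hf hU hzy hp
  obtain ⟨j, hjU, hjM⟩ := ((((hf.iterate M).tendsto y).comp hy).eventually
    (hU.mem_nhds hM)).and (eventually_gt_atTop M) |>.exists
  obtain ⟨n, hn, hrec⟩ := ha (θ j) (a (θ j) + M)
    (mem_Ico.2 ⟨by omega, by have := hθ.le_apply (x := j); omega⟩)
  have hneg_n := Set.mem_iInter₂.1 hjU n hn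
  rw [comp_apply, comp_apply, ← iterate_add_apply, add_comm] at hneg_n
  exact (birkhoffSum_nonneg_of_isRecordTime hrec).not_gt hneg_n

theorem exists_sifted_recordTimes [SeqCompactSpace X] (hf : Continuous f)
    (hψ : Continuous ψ) {K : ℝ} (hψK : ∀ x, ψ x ≤ K) (hK : 0 ≤ K)
    (hneg : ∀ x, (∀ n, 0 ≤ birkhoffSum f ψ n x) →
      ∃ c ∈ omegaSet f x, ∀ n, 1 ≤ n → birkhoffSum f ψ n c < 0) {b : X}
    (hT : ¬BddAbove (Set.range fun m => birkhoffSum f ψ m b)) {β : ℝ} (hβ : 0 < β) (L : ℕ) :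
    ∃ n : ℕ → ℕ, StrictMono n ∧ 0 < n 0 ∧ ∀ j, j + 1 < L → ∀ k ∈ Ioc (n j) (n (j + 1)),
      birkhoffSum f ψ k b - k * β ≤ birkhoffSum f ψ (n j) b - n j * β ∧
        birkhoffSum f ψ (k - 1) b ≤ birkhoffSum f ψ (n (j + 1)) b := by
  set T : ℕ → ℝ := fun m => birkhoffSum f ψ m b
  set r := recordTime T
  have hr := recordTime_strictMono hT
  have hstep : ∀ i, T (r (i + 1)) - r (i + 1) * β ≤
      T (r i) - r i * β + K - (r (i + 1) - r i : ℕ) * β := by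
    intro i
    have := recordTime_succ_le_add hT (K := K)
      (fun m => by simp only [T, birkhoffSum_succ]; linarith [hψK (f^[m] b)]) i
    rw [Nat.cast_sub (hr.monotone (Nat.le_succ i))]
    linarith
  have hgap : ∀ G : ℕ, ∃ Z, ∀ I, ∃ t ∈ Ico I (I + Z), G < r (t + 1) - r t := fun G =>
    let ⟨Z, hZ⟩ := exists_window_not_isRecordTime hf hψ hψK hK hneg b G
    ⟨Z, exists_recordTime_gap_gt hT hZ⟩
  obtain ⟨F, hF⟩ := exists_staircase (σ := fun i => T (r i) - r i * β) hβ hK hstep hgap L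
  obtain ⟨s, hs, hs0, -, hstair⟩ := hF 1
  refine ⟨fun j => r (s j), hr.comp hs, (recordTime_zero (T := T)).symm.trans_lt (hr hs0),
    fun j hj k hk => ⟨sub_mul_le_of_forall_mem_Ioc hT hβ.le (hstair j hj) hk,
      le_recordTime_of_le hT (le_trans (Nat.sub_le k 1) (mem_Ioc.1 hk).2)⟩⟩

end Dynamics

section Products

variable {X : Type*} {f : X → X} {φ : X → ℝ} {c μ : ℝ}

lemma birkhoffSum_log_div (hφ : ∀ x, 0 < φ x) (hμ : 0 < μ) (n : ℕ) (x : X) :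
    birkhoffSum f (fun y => Real.log (φ y / μ)) n x =
      Real.log (∏ k ∈ range n, φ (f^[k] x)) - n * Real.log μ := by
  simp [birkhoffSum, Real.log_div (hφ _).ne' hμ.ne', Real.log_prod fun k _ => (hφ _).ne',
    sum_sub_distrib]

lemma pow_le_prod_iff (hφ : ∀ x, 0 < φ x) (hc : 0 < c) (hμ : 0 < μ) (n : ℕ) (x : X) :
    c ^ n ≤ ∏ k ∈ range n, φ (f^[k] x) ↔
      n * Real.log (c / μ) ≤ birkhoffSum f (fun y => Real.log (φ y / μ)) n x := by
  rw [birkhoffSum_log_div hφ hμ, Real.log_div hc.ne' hμ.ne',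
    ← Real.log_le_log_iff (pow_pos hc n) (prod_pos fun k _ => hφ _), Real.log_pow]
  constructor <;> intro h <;> linarith

lemma prod_le_pow_iff (hφ : ∀ x, 0 < φ x) (hc : 0 < c) (hμ : 0 < μ) (n : ℕ) (x : X) :
    ∏ k ∈ range n, φ (f^[k] x) ≤ c ^ n ↔
      birkhoffSum f (fun y => Real.log (φ y / μ)) n x ≤ n * Real.log (c / μ) := by
  rw [birkhoffSum_log_div hφ hμ, Real.log_div hc.ne' hμ.ne',
    ← Real.log_le_log_iff (prod_pos fun k _ => hφ _) (pow_pos hc n), Real.log_pow]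
  constructor <;> intro h <;> linarith

lemma prod_Ico_iterate (a d : ℕ) (x : X) :
    ∏ i ∈ Ico a (a + d), φ (f^[i] x) = ∏ k ∈ range d, φ (f^[k] (f^[a] x)) := by
  simp [prod_Ico_eq_prod_range, ← iterate_add_apply, add_comm]

lemma pow_le_prod_Ico_iff (hφ : ∀ x, 0 < φ x) (hc : 0 < c) (hμ : 0 < μ) {a b : ℕ} (hab : a ≤ b)
    (x : X) :
    c ^ (b - a) ≤ ∏ i ∈ Ico a b, φ (f^[i] x) ↔
      (b - a : ℕ) * Real.log (c / μ) ≤ birkhoffSum f (fun y => Real.log (φ y / μ)) b x -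
        birkhoffSum f (fun y => Real.log (φ y / μ)) a x := by
  obtain ⟨d, rfl⟩ := Nat.exists_eq_add_of_le hab
  rw [prod_Ico_iterate, add_tsub_cancel_left, pow_le_prod_iff hφ hc hμ, birkhoffSum_add,
    add_sub_cancel_left]

lemma prod_Ico_le_pow_iff (hφ : ∀ x, 0 < φ x) (hc : 0 < c) (hμ : 0 < μ) {a b : ℕ} (hab : a ≤ b)
    (x : X) :
    ∏ i ∈ Ico a b, φ (f^[i] x) ≤ c ^ (b - a) ↔
      birkhoffSum f (fun y => Real.log (φ y / μ)) b x -
        birkhoffSum f (fun y => Real.log (φ y / μ)) a x ≤ (b - a : ℕ) * Real.log (c / μ) := by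
  obtain ⟨d, rfl⟩ := Nat.exists_eq_add_of_le hab
  rw [prod_Ico_iterate, add_tsub_cancel_left, prod_le_pow_iff hφ hc hμ, birkhoffSum_add,
    add_sub_cancel_left]

lemma not_bddAbove_range_birkhoffSum_log_div (hφ : ∀ x, 0 < φ x) (hμ : 0 < μ) (hμ₁ : μ < 1)
    {b : X} (hb : ∀ n, 1 ≤ n → 1 ≤ ∏ k ∈ range n, φ (f^[k] b)) :
    ¬BddAbove (Set.range fun m => birkhoffSum f (fun y => Real.log (φ y / μ)) m b) := by
  have hlow : ∀ m : ℕ, m * Real.log (1 / μ) ≤ birkhoffSum f (fun y => Real.log (φ y / μ)) m b :=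
    fun m => (pow_le_prod_iff hφ one_pos hμ m b).1 <| by
      rcases m with _ | m
      · simp
      · simpa using hb (m + 1) (by omega)
  have hpos : 0 < Real.log (1 / μ) := Real.log_pos ((one_lt_div hμ).2 hμ₁)
  exact Filter.not_bddAbove_of_tendsto_atTop <|
    Filter.tendsto_atTop_mono hlow (tendsto_natCast_atTop_atTop.atTop_mul_const hpos)

lemma birkhoffSum_log_div_neg (hφ : ∀ x, 0 < φ x) (hc : 0 < c) (hcμ : c < μ) {n : ℕ} (hn : 1 ≤ n)
    {x : X} (h : ∏ k ∈ range n, φ (f^[k] x) ≤ c ^ n) :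
    birkhoffSum f (fun y => Real.log (φ y / μ)) n x < 0 := by
  have hμ := hc.trans hcμ
  refine ((prod_le_pow_iff hφ hc hμ n x).1 h).trans_lt (mul_neg_of_pos_of_neg ?_ ?_)
  · exact_mod_cast hn
  · exact Real.log_neg (div_pos hc hμ) ((div_lt_one hμ).2 hcμ)

end Products

theorem liao_sifting_lemma_general {X : Type*} [MetricSpace X] [CompactSpace X]
    (f : X → X) (hf : Continuous f)
    (φ : X → ℝ) (hφc : Continuous φ) (hφ : ∀ x, 0 < φ x)
    (b : X) (hb : ∀ n : ℕ, 1 ≤ n → 1 ≤ ∏ k ∈ Finset.range n, φ (f^[k] b))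
    (lam₁ lam₂ : ℝ) (hlam₁ : 0 < lam₁) (h12 : lam₁ < lam₂) (h21 : lam₂ < 1)
    (tilde : ∀ x : X,
      (∀ n : ℕ, 1 ≤ n → lam₂ ^ n ≤ ∏ k ∈ Finset.range n, φ (f^[k] x)) →
      ∃ c ∈ omegaSet f x,
        ∀ n : ℕ, 1 ≤ n → ∏ k ∈ Finset.range n, φ (f^[k] c) ≤ lam₁ ^ n)
    (lam₃ : ℝ) (h23 : lam₂ < lam₃) (l : ℕ) :
    ∃ n : ℕ → ℕ, StrictMono n ∧ 0 < n 0 ∧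
      ∀ j : ℕ, j + 1 < l → ∀ k : ℕ, n j + 1 ≤ k → k ≤ n (j + 1) →
        (∏ i ∈ Finset.Icc (n j) (k - 1), φ (f^[i] b)) ≤ lam₃ ^ (k - n j) ∧
        lam₂ ^ (n (j + 1) - k + 1) ≤
          ∏ i ∈ Finset.Icc (k - 1) (n (j + 1) - 1), φ (f^[i] b) := by
  have hlam₂ : 0 < lam₂ := hlam₁.trans h12
  set ψ : X → ℝ := fun x => Real.log (φ x / lam₂)
  have hψ : Continuous ψ := (hφc.div_const lam₂).log fun x => (div_pos (hφ x) hlam₂).ne'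
  obtain ⟨K, hK0, hψK⟩ : ∃ K, 0 ≤ K ∧ ∀ x, ψ x ≤ K :=
    let ⟨K, hK⟩ := (isCompact_range hψ).bddAbove
    ⟨max K 0, le_max_right _ _, fun x => (hK ⟨x, rfl⟩).trans (le_max_left _ _)⟩
  have hneg : ∀ x, (∀ n, 0 ≤ birkhoffSum f ψ n x) →
      ∃ c ∈ omegaSet f x, ∀ n, 1 ≤ n → birkhoffSum f ψ n c < 0 := fun x hx =>
    let ⟨c, hc, hc₁⟩ :=
      tilde x fun n _ => (pow_le_prod_iff hφ hlam₂ hlam₂ n x).2 (by simpa using hx n)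
    ⟨c, hc, fun n hn => birkhoffSum_log_div_neg hφ hlam₁ h12 hn (hc₁ n hn)⟩
  obtain ⟨n, hn, hn0, hsift⟩ := exists_sifted_recordTimes hf hψ hψK hK0 hneg
    (not_bddAbove_range_birkhoffSum_log_div hφ hlam₂ h21 hb)
    (Real.log_pos ((one_lt_div hlam₂).2 h23)) l
  refine ⟨n, hn, hn0, fun j hj k hk₁ hk₂ => ?_⟩
  obtain ⟨hleft, hright⟩ := hsift j hj k (mem_Ioc.2 ⟨hk₁, hk₂⟩)
  constructor
  · rw [Icc_sub_one_right_eq_Ico_of_not_isMin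
      (by simp only [isMin_iff_eq_bot, Nat.bot_eq_zero]; omega),
      prod_Ico_le_pow_iff hφ (hlam₂.trans h23) hlam₂ (by omega), Nat.cast_sub (by omega)]
    linarith
  · rw [Icc_sub_one_right_eq_Ico_of_not_isMin
      (by simp only [isMin_iff_eq_bot, Nat.bot_eq_zero]; omega),
      show n (j + 1) - k + 1 = n (j + 1) - (k - 1) by omega,
      pow_le_prod_Ico_iff hφ hlam₂ hlam₂ (by omega), div_self hlam₂.ne', Real.log_one, mul_zero]
    linarith

/-- **Liao's sifting lemma (function version).** Let `X` be a compact metric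
space, `f : X → X` continuous and `φ : X → ℝ` continuous and strictly positive.
Assume (1) there is `b` with `∏_{k=0}^{n-1} φ(f^k b) ≥ 1` for all `n ≥ 1`;
(2) there are `0 < λ₁ < λ₂ < 1` such that every `x` with
`∏_{k=0}^{n-1} φ(f^k x) ≥ λ₂^n` for all `n ≥ 1` has a point `c ∈ ω(x)` with
`∏_{k=0}^{n-1} φ(f^k c) ≤ λ₁^n` for all `n ≥ 1`. Then for every `λ₃ ∈ (λ₂, 1)`
and every `l` there are positive integers `n 0 < n 1 < ⋯ < n (l-1)` such that for
every `j` with `j + 1 < l` (i.e. each consecutive pair among the `l` integers)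
and every `k` with `n j + 1 ≤ k ≤ n (j+1)`:
`∏_{i=n j}^{k-1} φ(f^i b) ≤ λ₃^(k - n j)` and
`∏_{i=k-1}^{n (j+1) - 1} φ(f^i b) ≥ λ₂^(n (j+1) - k + 1)`. -/
theorem liao_sifting_lemma {X : Type*} [MetricSpace X] [CompactSpace X]
    (f : X → X) (hf : Continuous f)
    (φ : X → ℝ) (hφc : Continuous φ) (hφ : ∀ x, 0 < φ x)
    (b : X) (hb : ∀ n : ℕ, 1 ≤ n → 1 ≤ ∏ k ∈ Finset.range n, φ (f^[k] b))
    (lam₁ lam₂ : ℝ) (hlam₁ : 0 < lam₁) (h12 : lam₁ < lam₂) (h21 : lam₂ < 1)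
    (tilde : ∀ x : X,
      (∀ n : ℕ, 1 ≤ n → lam₂ ^ n ≤ ∏ k ∈ Finset.range n, φ (f^[k] x)) →
      ∃ c ∈ omegaSet f x,
        ∀ n : ℕ, 1 ≤ n → ∏ k ∈ Finset.range n, φ (f^[k] c) ≤ lam₁ ^ n)
    (lam₃ : ℝ) (h23 : lam₂ < lam₃) (h31 : lam₃ < 1) (l : ℕ) :
    ∃ n : ℕ → ℕ, StrictMono n ∧ 0 < n 0 ∧
      ∀ j : ℕ, j + 1 < l → ∀ k : ℕ, n j + 1 ≤ k → k ≤ n (j + 1) →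
        (∏ i ∈ Finset.Icc (n j) (k - 1), φ (f^[i] b)) ≤ lam₃ ^ (k - n j) ∧
        lam₂ ^ (n (j + 1) - k + 1) ≤
          ∏ i ∈ Finset.Icc (k - 1) (n (j + 1) - 1), φ (f^[i] b) :=
  liao_sifting_lemma_general f hf φ hφc hφ b hb lam₁ lam₂ hlam₁ h12 h21 tilde lam₃ h23 l
end

section
/- Uniform contraction dichotomy: Let X be a nonempty compact metric space, f : X → X a continuous map, and φ : X → ℝ a continuous strictly positive function. If there is no point p ∈ X with ∏_{k=0}^{n-1} φ(f^k p) ≥ 1 for all n ≥ 1 (i.e., for every x ∈ X there exists n ≥ 1 with ∏_{k=0}^{n-1} φ(f^k x) < 1), then there exist C ≥ 1 and λ ∈ (0,1) such that ∏_{k=0}^{n-1} φ(f^k x) ≤ C·λ^n for every x ∈ X and every n ≥ 1. -/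
/-- **Uniform contraction dichotomy.** Let `X` be a nonempty compact metric space,
`f : X → X` continuous, `φ : X → ℝ` continuous and strictly positive. If for every
`x ∈ X` there exists `n ≥ 1` with `∏_{k=0}^{n-1} φ(f^k x) < 1`, then there exist
`C ≥ 1` and `λ ∈ (0,1)` with `∏_{k=0}^{n-1} φ(f^k x) ≤ C * λ ^ n` for every `x`
and every `n ≥ 1`. -/
theorem uniform_contraction_dichotomy {X : Type*} [MetricSpace X] [CompactSpace X]
    [Nonempty X] (f : X → X) (hf : Continuous f)
    (φ : X → ℝ) (hφc : Continuous φ) (hφ : ∀ x, 0 < φ x)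
    (h : ∀ x : X, ∃ n : ℕ, 1 ≤ n ∧ ∏ k ∈ Finset.range n, φ (f^[k] x) < 1) :
    ∃ C : ℝ, 1 ≤ C ∧ ∃ lam : ℝ, 0 < lam ∧ lam < 1 ∧
      ∀ x : X, ∀ n : ℕ, 1 ≤ n → ∏ k ∈ Finset.range n, φ (f^[k] x) ≤ C * lam ^ n := by
  set S : ℕ → X → ℝ := fun n x => ∏ k ∈ Finset.range n, φ (f^[k] x) with hS
  have hScont : ∀ n, Continuous (S n) := fun n =>
    continuous_finset_prod _ fun k _ => hφc.comp (hf.iterate k)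
  have hSpos : ∀ n x, 0 < S n x := fun n x =>
    Finset.prod_pos fun k _ => hφ _
  have hScoc : ∀ (m n : ℕ) (x : X), S (m + n) x = S m x * S n (f^[m] x) := by
    intro m n x
    simp only [hS]
    rw [Finset.prod_range_add]
    congr 1
    refine Finset.prod_congr rfl fun k _ => ?_
    rw [add_comm m k, Function.iterate_add_apply]
  -- uniform N via compactness
  obtain ⟨t, ht⟩ := isCompact_univ.elim_finite_subcover
      (fun n : ℕ => {x : X | S (n + 1) x < 1})
      (fun n => isOpen_lt (hScont (n + 1)) continuous_const)
      (by
        intro x _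
        obtain ⟨n, hn1, hn⟩ := h x
        exact Set.mem_iUnion.2 ⟨n - 1, by simpa [hS, Nat.sub_add_cancel hn1] using hn⟩)
  set N : ℕ := t.sup id + 1 with hN
  have hNmem : ∀ x : X, ∃ m ∈ Finset.Icc 1 N, S m x < 1 := by
    intro x
    obtain ⟨n, hnt, hx⟩ := Set.mem_iUnion₂.1 (ht (Set.mem_univ x))
    exact ⟨n + 1, Finset.mem_Icc.2 ⟨Nat.le_add_left 1 n,
      Nat.add_le_add_right (Finset.le_sup (f := id) hnt) 1⟩, hx⟩
  have hIcc : (Finset.Icc 1 N).Nonempty := ⟨1, Finset.mem_Icc.2 ⟨le_refl 1, Nat.le_add_left 1 _⟩⟩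
  set g : X → ℝ := fun x => (Finset.Icc 1 N).inf' hIcc (fun m => S m x) with hg
  have hgcont : Continuous g :=
    Continuous.finset_inf'_apply hIcc (fun m _ => hScont m)
  obtain ⟨x₀, -, hx₀⟩ := isCompact_univ.exists_isMaxOn Set.univ_nonempty hgcont.continuousOn
  set θ : ℝ := g x₀ with hθ
  have hθpos : 0 < θ :=
    (Finset.lt_inf'_iff hIcc).2 fun m _ => hSpos m x₀
  have hθlt1 : θ < 1 := by
    obtain ⟨m, hm, hmlt⟩ := hNmem x₀
    exact lt_of_le_of_lt (Finset.inf'_le _ hm) hmlt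
  -- for every x there is m ∈ [1,N] with S m x ≤ θ
  have hkey : ∀ x : X, ∃ m ∈ Finset.Icc 1 N, S m x ≤ θ := by
    intro x
    obtain ⟨m, hm, hmeq⟩ := Finset.exists_mem_eq_inf' hIcc (fun m => S m x)
    exact ⟨m, hm, hmeq ▸ hx₀ (Set.mem_univ x)⟩
  -- bound M on φ
  obtain ⟨x₁, -, hx₁⟩ := isCompact_univ.exists_isMaxOn Set.univ_nonempty hφc.continuousOn
  set M : ℝ := max 1 (φ x₁) with hM
  have hM1 : (1:ℝ) ≤ M := le_max_left _ _
  have hMb : ∀ y : X, φ y ≤ M := fun y => le_trans (hx₁ (Set.mem_univ y)) (le_max_right _ _)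
  -- λ
  set lam : ℝ := θ ^ ((N : ℝ)⁻¹) with hlam
  have hlampos : 0 < lam := Real.rpow_pos_of_pos hθpos _
  have hNpos : (0:ℝ) < N := by positivity
  have hlamlt1 : lam < 1 := Real.rpow_lt_one hθpos.le hθlt1 (by positivity)
  have hlamN : lam ^ N = θ := by
    rw [hlam, ← Real.rpow_natCast (θ ^ ((N:ℝ)⁻¹)) N, ← Real.rpow_mul hθpos.le,
      inv_mul_cancel₀ (ne_of_gt hNpos), Real.rpow_one]
  set C : ℝ := (M / lam) ^ N with hC
  have hMlam : 1 ≤ M / lam := by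
    rw [le_div_iff₀ hlampos]
    exact le_trans (by linarith) hM1
  have hC1 : (1:ℝ) ≤ C := one_le_pow₀ hMlam
  refine ⟨C, hC1, lam, hlampos, hlamlt1, ?_⟩
  -- main induction
  have main : ∀ n : ℕ, ∀ x : X, S n x ≤ C * lam ^ n := by
    intro n
    induction n using Nat.strong_induction_on with
    | _ n ih =>
      intro x
      by_cases hn : n ≤ N
      · -- small case
        have h1 : S n x ≤ M ^ n := by
          calc S n x ≤ ∏ k ∈ Finset.range n, M :=
                Finset.prod_le_prod (fun k _ => (hφ _).le) (fun k _ => hMb _)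
            _ = M ^ n := by rw [Finset.prod_const, Finset.card_range]
        have h2 : M ^ n ≤ M ^ N := pow_le_pow_right₀ hM1 hn
        have h3 : lam ^ N ≤ lam ^ n := pow_le_pow_of_le_one hlampos.le hlamlt1.le hn
        have h4 : M ^ N = C * lam ^ N := by
          rw [hC, div_pow, div_mul_cancel₀]
          positivity
        calc S n x ≤ M ^ N := le_trans h1 h2
          _ = C * lam ^ N := h4
          _ ≤ C * lam ^ n := by
              apply mul_le_mul_of_nonneg_left h3 (by positivity)
      · push_neg at hn
        obtain ⟨m, hm, hmθ⟩ := hkey x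
        obtain ⟨hm1, hmN⟩ := Finset.mem_Icc.1 hm
        have hmn : m < n := lt_of_le_of_lt hmN hn
        have hsplit : S n x = S m x * S (n - m) (f^[m] x) := by
          rw [← hScoc m (n - m) x, Nat.add_sub_cancel' hmn.le]
        have hrec := ih (n - m) (by omega) (f^[m] x)
        have hθm : θ ≤ lam ^ m := by
          rw [← hlamN]
          exact pow_le_pow_of_le_one hlampos.le hlamlt1.le hmN
        calc S n x = S m x * S (n - m) (f^[m] x) := hsplit
          _ ≤ lam ^ m * (C * lam ^ (n - m)) := by
              apply mul_le_mul (le_trans hmθ hθm) hrec (hSpos _ _).le (by positivity)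
          _ = C * lam ^ n := by
              rw [← mul_assoc, mul_comm (lam ^ m) C, mul_assoc, ← pow_add,
                Nat.add_sub_cancel' hmn.le]
  exact fun x n _ => main n x
end

section
/- Subcase 2 of the main proof: Let X be a metric space, f : X → X a continuous map, φ : X → ℝ a continuous strictly positive function, and constants λ, λ₁ with 0 < λ < λ₁ < 1. Suppose q ∈ X satisfies ∏_{k=0}^{n-1} φ(f^k q) ≤ λ^n for all n ≥ 1, and x̃ ∈ X is a point such that for every y ∈ ω(x̃) there exists n ≥ 1 with ∏_{k=0}^{n-1} φ(f^k y) ≥ λ₁^n. Then q ∉ ω(x̃); in particular ω(x̃) is a proper subset of X whenever q ∈ X. -/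
/-- **Subcase 2 of the main proof.** Let `f : X → X` be continuous, `φ : X → ℝ`
continuous and strictly positive, `0 < λ < λ₁ < 1`. If `q` satisfies
`∏_{k=0}^{n-1} φ(f^k q) ≤ λ^n` for all `n ≥ 1`, and every `y ∈ ω(x̃)` has some
`n ≥ 1` with `∏_{k=0}^{n-1} φ(f^k y) ≥ λ₁^n`, then `q ∉ ω(x̃)`; in particular
`ω(x̃)` is a proper subset of `X`. -/
theorem subcase_two {X : Type*} [MetricSpace X]
    (f : X → X) (hf : Continuous f)
    (φ : X → ℝ) (hφc : Continuous φ) (hφ : ∀ x, 0 < φ x)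
    (lam lam₁ : ℝ) (hlam : 0 < lam) (hlt : lam < lam₁) (hlam₁ : lam₁ < 1)
    (q : X) (hq : ∀ n : ℕ, 1 ≤ n → ∏ k ∈ Finset.range n, φ (f^[k] q) ≤ lam ^ n)
    (xt : X)
    (hxt : ∀ y ∈ omegaSet f xt, ∃ n : ℕ, 1 ≤ n ∧
      lam₁ ^ n ≤ ∏ k ∈ Finset.range n, φ (f^[k] y)) :
    q ∉ omegaSet f xt ∧ omegaSet f xt ≠ Set.univ := by
  have hmain : q ∉ omegaSet f xt := by
    intro hqmem
    obtain ⟨n, hn1, hge⟩ := hxt q hqmem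
    have h1 : lam ^ n < lam₁ ^ n :=
      pow_lt_pow_left₀ hlt hlam.le (Nat.one_le_iff_ne_zero.mp hn1)
    exact absurd ((hge.trans (hq n hn1)).trans_lt h1) (lt_irrefl _)
  refine ⟨hmain, fun h => hmain ?_⟩
  rw [h]; trivial
end

section
/- Quasi-hyperbolic strings from the sifting lemma: Let X be a compact metric space, f : X → X a continuous map, φ, ψ : X → ℝ continuous strictly positive functions, and λ ∈ (0,1) with φ(x)·ψ(f x) ≤ λ for every x ∈ X. Assume: (1) there is b ∈ X with ∏_{k=0}^{n-1} φ(f^k b) ≥ 1 for all n ≥ 1; (2) there are λ₁, λ₂ with λ < λ₁ < λ₂ < 1 such that every x ∈ X satisfying ∏_{k=0}^{n-1} φ(f^k x) ≥ λ₂^n for all n ≥ 1 has a point c ∈ ω(x) with ∏_{k=0}^{n-1} φ(f^k c) ≤ λ₁^n for all n ≥ 1. Then for every λ₃ ∈ (λ₂,1) and every l ∈ ℕ there exist positive integers n₁ < ⋯ < n_l such that for every j ∈ {1,…,l−1} and every k with n_j + 1 ≤ k ≤ n_{j+1}: ∏_{i=n_j}^{k-1} φ(f^i b) ≤ λ₃^{k-n_j}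 and ∏_{i=k-1}^{n_{j+1}-1} ψ(f^{i+1} b) ≤ (λ/λ₂)^{n_{j+1}-k+1}. -/
open Filter Finset

set_option linter.unusedSectionVars false
set_option linter.deprecated false

namespace QHS

variable {X : Type*} [MetricSpace X] [CompactSpace X]

/-- product of `φ` along the orbit segment `[t, t+m)` of `x` -/
def win (f : X → X) (φ : X → ℝ) (x : X) (t m : ℕ) : ℝ :=
  ∏ k ∈ range m, φ (f^[t + k] x)

lemma win_pos (f : X → X) (φ : X → ℝ) (hφ : ∀ x, 0 < φ x) (x : X) (t m : ℕ) :
    0 < win f φ x t m :=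
  Finset.prod_pos fun _ _ => hφ _

lemma win_zero (f : X → X) (φ : X → ℝ) (x : X) (t : ℕ) : win f φ x t 0 = 1 := by
  simp [win]

lemma win_comp (f : X → X) (φ : X → ℝ) (x : X) (t m m' : ℕ) :
    win f φ x t (m + m') = win f φ x t m * win f φ x (t + m) m' := by
  unfold win
  rw [Finset.prod_range_add]
  congr 1
  refine Finset.prod_congr rfl fun k _ => ?_
  have : t + (m + k) = t + m + k := by omega
  rw [this]

lemma win_shift (f : X → X) (φ : X → ℝ) (x : X) (s t m : ℕ) :
    win f φ (f^[s] x) t m = win f φ x (s + t) m := by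
  unfold win
  refine Finset.prod_congr rfl fun k _ => ?_
  rw [← Function.iterate_add_apply f (t + k) s x,
    show t + k + s = s + t + k by omega]

lemma win_continuous (f : X → X) (hf : Continuous f) (φ : X → ℝ) (hφc : Continuous φ)
    (t m : ℕ) : Continuous fun x => win f φ x t m := by
  unfold win
  exact continuous_finset_prod _ fun k _ => hφc.comp (hf.iterate _)

/-- **Uniform dip lemma.** -/
lemma dip (f : X → X) (hf : Continuous f) (φ : X → ℝ) (hφc : Continuous φ)
    (hφ : ∀ x, 0 < φ x) (lam₁ lam₂ μ : ℝ)
    (hl1 : 0 < lam₁) (h12 : lam₁ < lam₂) (h2μ : lam₂ < μ)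
    (tilde : ∀ x : X,
      (∀ n : ℕ, 1 ≤ n → lam₂ ^ n ≤ ∏ k ∈ Finset.range n, φ (f^[k] x)) →
      ∃ c ∈ omegaSet f x,
        ∀ n : ℕ, 1 ≤ n → ∏ k ∈ Finset.range n, φ (f^[k] c) ≤ lam₁ ^ n)
    (c : ℝ) (hc : 0 < c) :
    ∃ E : ℕ, ∀ x : X, ∃ t m : ℕ, 1 ≤ m ∧ t + m ≤ E ∧ win f φ x t m < c * μ ^ m := by
  have hl2 : 0 < lam₂ := lt_trans hl1 h12
  have hμ : 0 < μ := lt_trans hl2 h2μ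
  by_contra hcon
  push_neg at hcon
  set V : ℕ → Set X := fun E =>
    {x | ∀ t m : ℕ, 1 ≤ m → t + m ≤ E → c * μ ^ m ≤ win f φ x t m} with hV
  have hVne : ∀ E, (V E).Nonempty := by
    intro E; obtain ⟨x, hx⟩ := hcon E; exact ⟨x, hx⟩
  have hVanti : ∀ E, V (E + 1) ⊆ V E := fun E x hx t m h1 h2 =>
    hx t m h1 (le_trans h2 (Nat.le_succ E))
  have hVclosed : ∀ E, IsClosed (V E) := by
    intro E
    have : V E = ⋂ (t : ℕ) (m : ℕ) (_ : 1 ≤ m) (_ : t + m ≤ E),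
        {x | c * μ ^ m ≤ win f φ x t m} := by
      ext x; simp only [hV, Set.mem_setOf_eq, Set.mem_iInter]
    rw [this]
    exact isClosed_iInter fun t => isClosed_iInter fun m => isClosed_iInter fun _ =>
      isClosed_iInter fun _ =>
        isClosed_le continuous_const (win_continuous f hf φ hφc t m)
  obtain ⟨x, hx⟩ := IsCompact.nonempty_iInter_of_sequence_nonempty_isCompact_isClosed
    V hVanti hVne (IsClosed.isCompact (hVclosed 0)) hVclosed
  simp only [Set.mem_iInter] at hx
  have hxall : ∀ t m : ℕ, 1 ≤ m → c * μ ^ m ≤ win f φ x t m := fun t m h1 =>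
    hx (t + m) t m h1 le_rfl
  -- the infimum trick
  set g : ℕ → ℝ := fun t => win f φ x 0 t / μ ^ t with hg
  have hgmul : ∀ t, g t * μ ^ t = win f φ x 0 t := fun t => by
    simp only [hg]; exact div_mul_cancel₀ _ (by positivity)
  have hgpos : ∀ t, 0 < g t := fun t => div_pos (win_pos f φ hφ x 0 t) (pow_pos hμ t)
  have hglb : ∀ t, min c 1 ≤ g t := by
    intro t
    rcases Nat.eq_zero_or_pos t with h | h
    · subst h; simp [hg, win_zero]
    · refine le_trans (min_le_left _ _) ?_
      simp only [hg]
      rw [le_div_iff₀ (pow_pos hμ t)]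
      exact hxall 0 t h
  have hbdd : BddBelow (Set.range g) := ⟨min c 1, by rintro y ⟨t, rfl⟩; exact hglb t⟩
  set β := ⨅ t, g t with hβ
  have hβlb : min c 1 ≤ β := le_ciInf hglb
  have hβpos : 0 < β := lt_of_lt_of_le (lt_min hc one_pos) hβlb
  have hκ : (1 : ℝ) < μ / lam₂ := (one_lt_div hl2).2 h2μ
  obtain ⟨tstar, htstar⟩ : ∃ t, g t < β * (μ / lam₂) := by
    apply exists_lt_of_ciInf_lt
    rw [← hβ]; nlinarith
  set y := f^[tstar] x with hy
  have hywin : ∀ m : ℕ, win f φ y 0 m = win f φ x tstar m := by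
    intro m; rw [hy, win_shift, Nat.add_zero]
  have hsplit : ∀ m : ℕ, win f φ x 0 (tstar + m) = win f φ x 0 tstar * win f φ x tstar m :=
    fun m => by rw [win_comp f φ x 0 tstar m, Nat.zero_add]
  have hqual : ∀ n : ℕ, 1 ≤ n → lam₂ ^ n ≤ ∏ k ∈ Finset.range n, φ (f^[k] y) := by
    intro n hn
    obtain ⟨k, rfl⟩ : ∃ k, n = k + 1 := ⟨n - 1, by omega⟩
    have h2 : β * μ ^ (tstar + (k + 1)) ≤ win f φ x 0 (tstar + (k + 1)) := by
      calc β * μ ^ (tstar + (k + 1)) ≤ g (tstar + (k + 1)) * μ ^ (tstar + (k + 1)) :=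
            mul_le_mul_of_nonneg_right (ciInf_le hbdd _) (by positivity)
        _ = win f φ x 0 (tstar + (k + 1)) := hgmul _
    have h3 : win f φ x 0 tstar < β * (μ / lam₂) * μ ^ tstar := by
      rw [← hgmul tstar]
      exact mul_lt_mul_of_pos_right htstar (pow_pos hμ _)
    have hpos1 : 0 < win f φ x 0 tstar := win_pos f φ hφ x 0 tstar
    have h4 : lam₂ * μ ^ k * win f φ x 0 tstar ≤ win f φ x 0 (tstar + (k+1)) := by
      calc lam₂ * μ ^ k * win f φ x 0 tstar
          ≤ lam₂ * μ ^ k * (β * (μ / lam₂) * μ ^ tstar) := by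
            apply mul_le_mul_of_nonneg_left (le_of_lt h3); positivity
        _ = β * μ ^ (tstar + (k + 1)) := by
            field_simp; ring
        _ ≤ win f φ x 0 (tstar + (k+1)) := h2
    have h6 : lam₂ * μ ^ k ≤ win f φ x tstar (k+1) := by
      have := h4
      rw [hsplit (k+1)] at this
      exact le_of_mul_le_mul_left (by linarith [mul_comm (win f φ x 0 tstar) (win f φ x tstar (k+1))]) hpos1
    have h5 : lam₂ ^ (k + 1) ≤ lam₂ * μ ^ k := by
      rw [pow_succ']
      exact mul_le_mul_of_nonneg_left (pow_le_pow_left₀ hl2.le h2μ.le _) hl2.le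
    have h7 : lam₂ ^ (k+1) ≤ win f φ x tstar (k+1) := le_trans h5 h6
    rw [← hywin (k+1)] at h7
    unfold win at h7
    simpa using h7
  obtain ⟨c₀, hc₀ω, hc₀prod⟩ := tilde y hqual
  have hc₀win : ∀ m : ℕ, 1 ≤ m → c * μ ^ m ≤ win f φ c₀ 0 m := by
    intro m hm
    obtain ⟨nseq, hn1, hn2⟩ := hc₀ω
    have hcont := (win_continuous f hf φ hφc 0 m).continuousAt (x := c₀)
    have htend : Tendsto (fun j => win f φ (f^[nseq j] y) 0 m) atTop
        (nhds (win f φ c₀ 0 m)) := hcont.tendsto.comp hn2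
    refine ge_of_tendsto htend (Eventually.of_forall fun j => ?_)
    rw [win_shift, hy, win_shift]
    exact hxall _ m hm
  obtain ⟨N, hN⟩ := exists_pow_lt_of_lt_one hc (show lam₁ / μ < 1 by
    rw [div_lt_one hμ]; exact lt_trans h12 h2μ)
  set m := N + 1 with hm
  have hNm : (lam₁ / μ) ^ m < c :=
    lt_of_le_of_lt (pow_le_pow_of_le_one (by positivity)
      (le_of_lt ((div_lt_one hμ).2 (lt_trans h12 h2μ))) (Nat.le_succ N)) hN
  have h6 : win f φ c₀ 0 m ≤ lam₁ ^ m := by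
    have := hc₀prod m (by omega)
    unfold win
    simpa using this
  have h7 : c * μ ^ m ≤ lam₁ ^ m := le_trans (hc₀win m (by omega)) h6
  have h8 : lam₁ ^ m < c * μ ^ m := by
    have h9 : (lam₁ / μ) ^ m * μ ^ m < c * μ ^ m :=
      mul_lt_mul_of_pos_right hNm (pow_pos hμ m)
    rwa [div_pow, div_mul_cancel₀] at h9
    positivity
  linarith

end QHS

namespace QHS

/-- cancellation helper -/
lemma cancel_left {a x y : ℝ} (ha : 0 < a) (h : a * x ≤ a * y) : x ≤ y :=
  le_of_mul_le_mul_left h ha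

/-- `a^D * b^d ≤ a^d * b^D` for `0 < a ≤ b`, `d ≤ D`. -/
lemma ratio_mono {a b : ℝ} (ha : 0 < a) (hab : a ≤ b) {d D : ℕ} (hdD : d ≤ D) :
    a ^ D * b ^ d ≤ a ^ d * b ^ D := by
  have h1 : a ^ D = a ^ d * a ^ (D - d) := by
    rw [← pow_add]; congr 1; omega
  have h2 : b ^ D = b ^ d * b ^ (D - d) := by
    rw [← pow_add]; congr 1; omega
  rw [h1, h2]
  have h3 : a ^ (D - d) ≤ b ^ (D - d) := pow_le_pow_left₀ ha.le hab _
  have hb : 0 < b := lt_of_lt_of_le ha hab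
  calc a ^ d * a ^ (D - d) * b ^ d ≤ a ^ d * b ^ (D - d) * b ^ d := by
        have := mul_le_mul_of_nonneg_left h3 (le_of_lt (pow_pos ha d))
        nlinarith [pow_pos hb d, pow_pos ha d]
    _ = a ^ d * (b ^ d * b ^ (D - d)) := by ring

/-- level-down helper: from a `ρ`-line bound to a `σ`-line bound, `σ ≤ ρ`,
used for lower-bound lines. -/
lemma line_down {x y ρ σ : ℝ} (hx : 0 ≤ x) (hy : 0 ≤ y) (hσ : 0 < σ) (hσρ : σ ≤ ρ)
    {u v : ℕ} (huv : u ≤ v) (h : x * ρ ^ v ≤ y * ρ ^ u) : x * σ ^ v ≤ y * σ ^ u := by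
  have hρ : 0 < ρ := lt_of_lt_of_le hσ hσρ
  have h1 : (σ / ρ) ^ v ≤ (σ / ρ) ^ u :=
    pow_le_pow_of_le_one (by positivity) (by rw [div_le_one hρ]; exact hσρ) huv
  have h2 : x * σ ^ v = x * ρ ^ v * (σ / ρ) ^ v := by
    rw [div_pow]; field_simp
  have h3 : y * σ ^ u = y * ρ ^ u * (σ / ρ) ^ u := by
    rw [div_pow]; field_simp
  rw [h2, h3]
  calc x * ρ ^ v * (σ / ρ) ^ v ≤ y * ρ ^ u * (σ / ρ) ^ v := by
        apply mul_le_mul_of_nonneg_right h (by positivity)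
    _ ≤ y * ρ ^ u * (σ / ρ) ^ u := by
        apply mul_le_mul_of_nonneg_left h1 (by positivity)

section Records

variable {P : ℕ → ℝ} {ρ Φ : ℝ}

/-- existence of the next record -/
lemma next_ex (hp : ∀ n, 1 ≤ P n) (hρ0 : 0 < ρ) (hρ1 : ρ < 1) (t : ℕ) :
    ∃ d, 1 ≤ d ∧ P t * ρ ^ d < P (t + d) := by
  have hpt : 0 < P t := lt_of_lt_of_le one_pos (hp t)
  obtain ⟨d, hd⟩ := exists_pow_lt_of_lt_one (inv_pos.2 hpt) hρ1
  have hd1 : 1 ≤ d := by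
    by_contra h
    push_neg at h
    interval_cases d
    simp only [pow_zero] at hd
    have := hp t
    rw [lt_inv_comm₀ one_pos hpt] at hd
    · linarith
  refine ⟨d, hd1, ?_⟩
  have : P t * ρ ^ d < P t * (P t)⁻¹ :=
    mul_lt_mul_of_pos_left hd hpt
  rw [mul_inv_cancel₀ (ne_of_gt hpt)] at this
  exact lt_of_lt_of_le this (hp (t + d))

variable (hp : ∀ n, 1 ≤ P n) (hρ0 : 0 < ρ) (hρ1 : ρ < 1)

open Classical in
/-- the next record strictly after `t` -/
noncomputable def nxt (t : ℕ) : ℕ := t + Nat.find (next_ex hp hρ0 hρ1 t)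

/-- the sequence of record times, starting at time `1` -/
noncomputable def rc : ℕ → ℕ := fun i => (nxt hp hρ0 hρ1)^[i] 1

lemma rc_zero : rc hp hρ0 hρ1 0 = 1 := rfl

lemma rc_succ (i : ℕ) : rc hp hρ0 hρ1 (i + 1) = nxt hp hρ0 hρ1 (rc hp hρ0 hρ1 i) := by
  unfold rc
  rw [Function.iterate_succ_apply']

open Classical in
lemma nxt_lt (t : ℕ) : t < nxt hp hρ0 hρ1 t := by
  unfold nxt
  have := (Nat.find_spec (next_ex hp hρ0 hρ1 t)).1
  omega

open Classical in
lemma nxt_spec (t : ℕ) : P t * ρ ^ (nxt hp hρ0 hρ1 t - t) < P (nxt hp hρ0 hρ1 t) := by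
  unfold nxt
  have h := (Nat.find_spec (next_ex hp hρ0 hρ1 t)).2
  have h2 : t + Nat.find (next_ex hp hρ0 hρ1 t) - t = Nat.find (next_ex hp hρ0 hρ1 t) := by omega
  rw [h2]
  exact h

open Classical in
/-- interior bound: below the record line, cross-multiplied -/
lemma nxt_interior (t : ℕ) {s : ℕ} (h1 : t ≤ s) (h2 : s < nxt hp hρ0 hρ1 t) :
    P s * ρ ^ t ≤ P t * ρ ^ s := by
  rcases eq_or_lt_of_le h1 with h | h
  · subst h; exact le_rfl
  · have hd : s - t < Nat.find (next_ex hp hρ0 hρ1 t) := by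
      unfold nxt at h2; omega
    have := Nat.find_min (next_ex hp hρ0 hρ1 t) hd
    push_neg at this
    have h3 : P (t + (s - t)) ≤ P t * ρ ^ (s - t) := this (by omega)
    have h4 : t + (s - t) = s := by omega
    rw [h4] at h3
    calc P s * ρ ^ t ≤ P t * ρ ^ (s - t) * ρ ^ t :=
          mul_le_mul_of_nonneg_right h3 (by positivity)
      _ = P t * ρ ^ s := by rw [mul_assoc, ← pow_add]; congr 2; omega

end Records

end QHS

namespace QHS

section Machine

variable {P : ℕ → ℝ} {ρ Φ : ℝ}
variable (hp : ∀ n, 1 ≤ P n) (hρ0 : 0 < ρ) (hρ1 : ρ < 1)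

local notation "r" => rc hp hρ0 hρ1

lemma hP0 (hp' : ∀ n, 1 ≤ P n) (n : ℕ) : 0 < P n := lt_of_lt_of_le one_pos (hp' n)

lemma rc_lt_succ (i : ℕ) : r i < r (i + 1) := by
  rw [rc_succ]; exact nxt_lt hp hρ0 hρ1 _

lemma rc_mono : StrictMono (r) := strictMono_nat_of_lt_succ (rc_lt_succ hp hρ0 hρ1)

lemma rc_ge (i : ℕ) : i + 1 ≤ r i := by
  induction i with
  | zero => simp [rc_zero]
  | succ n ih => have := rc_lt_succ hp hρ0 hρ1 n; omega

lemma rc_add (a d : ℕ) : r a + d ≤ r (a + d) := by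
  induction d with
  | zero => simp
  | succ n ih =>
      have h := rc_lt_succ hp hρ0 hρ1 (a + n)
      have : a + (n + 1) = (a + n) + 1 := by omega
      rw [this]; omega

lemma rc_spec_strict (i : ℕ) :
    P (r i) * ρ ^ (r (i + 1)) < P (r (i + 1)) * ρ ^ (r i) := by
  have h := nxt_spec hp hρ0 hρ1 (r i)
  rw [← rc_succ] at h
  have h2 : P (r i) * ρ ^ (r (i + 1) - r i) * ρ ^ (r i) < P (r (i + 1)) * ρ ^ (r i) :=
    mul_lt_mul_of_pos_right h (by positivity)
  calc P (r i) * ρ ^ (r (i + 1))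
      = P (r i) * ρ ^ (r (i + 1) - r i) * ρ ^ (r i) := by
        rw [mul_assoc, ← pow_add]
        congr 2
        have := rc_lt_succ hp hρ0 hρ1 i
        omega
    _ < P (r (i + 1)) * ρ ^ (r i) := h2

lemma rc_interior (i : ℕ) {k : ℕ} (h1 : r i ≤ k) (h2 : k < r (i + 1)) :
    P k * ρ ^ (r i) ≤ P (r i) * ρ ^ k := by
  rw [rc_succ] at h2
  exact nxt_interior hp hρ0 hρ1 _ h1 h2

lemma rc_comp : ∀ i j, i ≤ j → P (r i) * ρ ^ (r j) ≤ P (r j) * ρ ^ (r i) := by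
  intro i j hij
  induction j, hij using Nat.le_induction with
  | base => exact le_rfl
  | succ j hij ih =>
      have A := ih
      have B := le_of_lt (rc_spec_strict hp hρ0 hρ1 j)
      apply cancel_left (show (0:ℝ) < P (r j) * ρ ^ (r j) by
        have := hP0 hp (r j); positivity)
      calc P (r j) * ρ ^ (r j) * (P (r i) * ρ ^ (r (j+1)))
          = (P (r i) * ρ ^ (r j)) * (P (r j) * ρ ^ (r (j+1))) := by ring
        _ ≤ (P (r j) * ρ ^ (r i)) * (P (r (j+1)) * ρ ^ (r j)) := by
            apply mul_le_mul A B (by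
              have := hP0 hp (r j); positivity) (by
              have := hP0 hp (r j); positivity)
        _ = P (r j) * ρ ^ (r j) * (P (r (j+1)) * ρ ^ (r i)) := by ring

/-- the last record index `≤ k` -/
lemma last_rec {k : ℕ} (hk : 1 ≤ k) :
    ∃ j, r j ≤ k ∧ k < r (j + 1) ∧ ∀ i, r i ≤ k → i ≤ j := by
  classical
  set j := Nat.findGreatest (fun i => r i ≤ k) k with hj
  have hex : r 0 ≤ k := by rw [rc_zero]; omega
  have hspec : r j ≤ k := Nat.findGreatest_spec (P := fun i => r i ≤ k) (Nat.zero_le k) hex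
  have hgt : ∀ i, r i ≤ k → i ≤ j := by
    intro i hi
    have hik : i ≤ k := le_trans (by have := rc_ge hp hρ0 hρ1 i; omega) hi
    exact Nat.le_findGreatest hik hi
  refine ⟨j, hspec, ?_, hgt⟩
  by_contra h
  push_neg at h
  have := hgt (j + 1) h
  omega

lemma grow_le (hΦ1 : 1 ≤ Φ) (hgrow : ∀ n, P (n + 1) ≤ P n * Φ)
    (s d : ℕ) : P (s + d) ≤ P s * Φ ^ d := by
  induction d with
  | zero => simp
  | succ n ih =>
      have h1 := hgrow (s + n)
      have h2 : P (s + n) * Φ ≤ P s * Φ ^ n * Φ :=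
        mul_le_mul_of_nonneg_right ih (by linarith)
      calc P (s + (n + 1)) = P ((s + n) + 1) := by ring_nf
        _ ≤ P (s + n) * Φ := h1
        _ ≤ P s * Φ ^ n * Φ := h2
        _ = P s * Φ ^ (n + 1) := by rw [mul_assoc, ← pow_succ]

lemma rc_cap (hΦ0 : 0 < Φ) (hgrow : ∀ n, P (n + 1) ≤ P n * Φ) (i : ℕ) :
    P (r (i + 1)) * ρ ^ (r i) * ρ ≤ P (r i) * ρ ^ (r (i + 1)) * Φ := by
  have hg := rc_lt_succ hp hρ0 hρ1 i
  have h1 : P (r (i + 1)) ≤ P (r (i + 1) - 1) * Φ := by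
    have h := hgrow (r (i + 1) - 1)
    have : r (i + 1) - 1 + 1 = r (i + 1) := by
      have := rc_ge hp hρ0 hρ1 (i + 1); omega
    rwa [this] at h
  have h2 : P (r (i + 1) - 1) * ρ ^ (r i) ≤ P (r i) * ρ ^ (r (i + 1) - 1) :=
    rc_interior hp hρ0 hρ1 i (by omega) (by omega)
  calc P (r (i + 1)) * ρ ^ (r i) * ρ
      ≤ P (r (i + 1) - 1) * Φ * ρ ^ (r i) * ρ := by
        have := mul_le_mul_of_nonneg_right h1 (show (0:ℝ) ≤ ρ ^ (r i) * ρ by positivity)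
        calc P (r (i + 1)) * ρ ^ (r i) * ρ = P (r (i+1)) * (ρ ^ (r i) * ρ) := by ring
          _ ≤ P (r (i + 1) - 1) * Φ * (ρ ^ (r i) * ρ) := this
          _ = P (r (i + 1) - 1) * Φ * ρ ^ (r i) * ρ := by ring
    _ ≤ P (r i) * ρ ^ (r (i + 1)) * Φ := by
        have h3 : P (r (i+1) - 1) * ρ ^ (r i) * (Φ * ρ) ≤ P (r i) * ρ ^ (r (i+1) - 1) * (Φ * ρ) :=
          mul_le_mul_of_nonneg_right h2 (by positivity)
        calc P (r (i + 1) - 1) * Φ * ρ ^ (r i) * ρ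
            = P (r (i+1) - 1) * ρ ^ (r i) * (Φ * ρ) := by ring
          _ ≤ P (r i) * ρ ^ (r (i+1) - 1) * (Φ * ρ) := h3
          _ = P (r i) * (ρ ^ (r (i+1) - 1) * ρ) * Φ := by ring
          _ = P (r i) * ρ ^ (r (i + 1)) * Φ := by
              rw [← pow_succ]
              congr 3
              omega

lemma rc_climb (hΦ0 : 0 < Φ) (hgrow : ∀ n, P (n + 1) ≤ P n * Φ) : ∀ e i, e ≤ i →
    P (r i) * ρ ^ (r e) * ρ ^ (i - e) ≤ P (r e) * ρ ^ (r i) * Φ ^ (i - e) := by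
  intro e i hei
  induction i, hei using Nat.le_induction with
  | base => simp
  | succ i hei ih =>
      have A := rc_cap hp hρ0 hρ1 hΦ0 hgrow i
      have he1 : i + 1 - e = (i - e) + 1 := by omega
      rw [he1, pow_succ, pow_succ]
      apply cancel_left (show (0:ℝ) < P (r i) * ρ ^ (r i) by
        have := hP0 hp (r i); positivity)
      calc P (r i) * ρ ^ (r i) * (P (r (i+1)) * ρ ^ (r e) * (ρ ^ (i - e) * ρ))
          = (P (r (i+1)) * ρ ^ (r i) * ρ) * (P (r i) * ρ ^ (r e) * ρ ^ (i - e)) := by ring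
        _ ≤ (P (r i) * ρ ^ (r (i+1)) * Φ) * (P (r e) * ρ ^ (r i) * Φ ^ (i - e)) := by
            apply mul_le_mul A ih (by
              have := hP0 hp (r i); positivity) (by
              have h5 := hP0 hp (r i); positivity)
        _ = P (r i) * ρ ^ (r i) * (P (r e) * ρ ^ (r (i+1)) * (Φ ^ (i - e) * Φ)) := by ring

end Machine

end QHS

namespace QHS

section Machine2

variable {P : ℕ → ℝ} {ρ Φ μ : ℝ}
variable (hp : ∀ n, 1 ≤ P n) (hρ0 : 0 < ρ) (hρ1 : ρ < 1)

local notation "r" => rc hp hρ0 hρ1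

lemma ub_lt_next (e C : ℕ)
    (hUB : ∀ s, r e ≤ s → s ≤ C → P s * ρ ^ (r e) ≤ P (r e) * ρ ^ s) :
    C < r (e + 1) := by
  by_contra h
  push_neg at h
  have h1 := hUB (r (e + 1)) (le_of_lt (rc_lt_succ hp hρ0 hρ1 e)) h
  have h2 := rc_spec_strict hp hρ0 hρ1 e
  linarith

lemma ext_ub (hΦ1 : 1 ≤ Φ) (hgrow : ∀ n, P (n + 1) ≤ P n * Φ)
    (e C D : ℕ) (hrC : r e ≤ C)
    (hUB : ∀ s, r e ≤ s → s ≤ C → P s * ρ ^ (r e) ≤ P (r e) * ρ ^ s)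
    (hDIP : P C * ρ ^ (r e) * Φ ^ D ≤ P (r e) * ρ ^ C * ρ ^ D) :
    ∀ s, r e ≤ s → s ≤ C + D → P s * ρ ^ (r e) ≤ P (r e) * ρ ^ s := by
  intro s hs1 hs2
  rcases le_or_gt s C with h | h
  · exact hUB s hs1 h
  · obtain ⟨d, rfl, hd1, hdD⟩ : ∃ d, s = C + d ∧ 1 ≤ d ∧ d ≤ D :=
      ⟨s - C, by omega, by omega, by omega⟩
    have A : P (C + d) ≤ P C * Φ ^ d := grow_le hΦ1 hgrow C d
    have hrm : ρ ^ D * Φ ^ d ≤ ρ ^ d * Φ ^ D :=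
      ratio_mono hρ0 (le_trans (le_of_lt hρ1) hΦ1) hdD
    apply cancel_left (show (0:ℝ) < Φ ^ D by positivity)
    have hPC := hP0 hp C
    have hPe := hP0 hp (r e)
    calc Φ ^ D * (P (C + d) * ρ ^ (r e))
        = (P (C + d)) * (ρ ^ (r e) * Φ ^ D) := by ring
      _ ≤ (P C * Φ ^ d) * (ρ ^ (r e) * Φ ^ D) := by
          apply mul_le_mul_of_nonneg_right A (by positivity)
      _ = (P C * ρ ^ (r e) * Φ ^ D) * Φ ^ d := by ring
      _ ≤ (P (r e) * ρ ^ C * ρ ^ D) * Φ ^ d := by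
          apply mul_le_mul_of_nonneg_right hDIP (by positivity)
      _ = (P (r e) * ρ ^ C) * (ρ ^ D * Φ ^ d) := by ring
      _ ≤ (P (r e) * ρ ^ C) * (ρ ^ d * Φ ^ D) := by
          apply mul_le_mul_of_nonneg_left hrm (by positivity)
      _ = Φ ^ D * (P (r e) * (ρ ^ C * ρ ^ d)) := by ring
      _ = Φ ^ D * (P (r e) * ρ ^ (C + d)) := by rw [← pow_add]

lemma loop (hΦ1 : 1 ≤ Φ) (hgrow : ∀ n, P (n + 1) ≤ P n * Φ)
    (hμ0 : 0 < μ) (hμρ : μ ≤ ρ) (E D : ℕ)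
    (hdip : ∀ q : ℕ, ∃ t m : ℕ, 1 ≤ m ∧ t + m ≤ E ∧
      P (q + t + m) * Φ ^ D < P (q + t) * ρ ^ D * μ ^ m) :
    ∀ F e C, r e ≤ C →
      (∀ s, r e ≤ s → s ≤ C → P s * ρ ^ (r e) ≤ P (r e) * ρ ^ s) →
      r (e + 1) ≤ C + F →
      ∃ e' B', e < e' ∧ e' ≤ e + E ∧ C < r (e + 1) ∧ r e' ≤ B' ∧
        (∀ s, r e' ≤ s → s ≤ B' → P s * ρ ^ (r e') ≤ P (r e') * ρ ^ s) ∧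
        (P B' * ρ ^ (r e') * Φ ^ D ≤ P (r e') * ρ ^ B' * ρ ^ D) := by
  intro F
  induction F with
  | zero =>
      intro e C hrC hUB hfuel
      exfalso
      have := ub_lt_next hp hρ0 hρ1 e C hUB
      omega
  | succ F IH =>
      intro e C hrC hUB hfuel
      obtain ⟨t, m, hm1, htm, hdp⟩ := hdip C
      set B' := C + t + m with hB'
      have hCB : C < B' := by omega
      have hCnext : C < r (e + 1) := ub_lt_next hp hρ0 hρ1 e C hUB
      by_cases hcase : ∀ s, r e ≤ s → s ≤ B' → P s * ρ ^ (r e) ≤ P (r e) * ρ ^ s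
      · have hfuel2 : r (e + 1) ≤ B' + F := by omega
        obtain ⟨e', B'', o1, o2, o3, o4, o5, o6⟩ :=
          IH e B' (by omega) hcase hfuel2
        exact ⟨e', B'', o1, o2, hCnext, o4, o5, o6⟩
      · push_neg at hcase
        obtain ⟨s₀, hs₀1, hs₀2, hs₀3⟩ := hcase
        have hnext_le : r (e + 1) ≤ s₀ := by
          by_contra h
          push_neg at h
          have := rc_interior hp hρ0 hρ1 e hs₀1 h
          linarith
        have hre1 : 1 ≤ r e := rc_ge hp hρ0 hρ1 e |> fun h => by omega
        have hB1 : 1 ≤ B' := by omega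
        obtain ⟨e', he'1, he'2, he'3⟩ := last_rec hp hρ0 hρ1 (k := B') hB1
        have h01 : e + 1 ≤ e' := he'3 (e + 1) (le_trans hnext_le hs₀2)
        have h02 : e' ≤ e + E := by
          have hra := rc_add hp hρ0 hρ1 (e + 1) (e' - (e + 1))
          have heq : (e + 1) + (e' - (e + 1)) = e' := by omega
          rw [heq] at hra
          omega
        have o5 : ∀ s, r e' ≤ s → s ≤ B' → P s * ρ ^ (r e') ≤ P (r e') * ρ ^ s := by
          intro s h1 h2
          apply rc_interior hp hρ0 hρ1 e' h1
          have hno : ¬ (r (e' + 1) ≤ B') := fun hcon => by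
            have := he'3 _ hcon; omega
          omega
        have o6 : P B' * ρ ^ (r e') * Φ ^ D ≤ P (r e') * ρ ^ B' * ρ ^ D := by
          have hCt1 : 1 ≤ C + t := by omega
          obtain ⟨iq, hiq1, hiq2, hiq3⟩ := last_rec hp hρ0 hρ1 (k := C + t) hCt1
          have hiqe' : iq ≤ e' := he'3 iq (le_trans hiq1 (by omega))
          have A := rc_interior hp hρ0 hρ1 iq hiq1 hiq2
          have hPCt := hP0 hp (C + t)
          have hPiq := hP0 hp (r iq)
          have hPe' := hP0 hp (r e')
          have hPB' := hP0 hp B'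
          have B : P B' * Φ ^ D ≤ P (C + t) * ρ ^ D * ρ ^ m := by
            have h1 : μ ^ m ≤ ρ ^ m := pow_le_pow_left₀ hμ0.le hμρ m
            calc P B' * Φ ^ D ≤ P (C + t) * ρ ^ D * μ ^ m := le_of_lt hdp
              _ ≤ P (C + t) * ρ ^ D * ρ ^ m := by
                  apply mul_le_mul_of_nonneg_left h1 (by positivity)
          have Cc := rc_comp hp hρ0 hρ1 iq e' hiqe'
          have hAC : P (C + t) * ρ ^ (r e') ≤ P (r e') * ρ ^ (C + t) := by
            apply cancel_left (show (0:ℝ) < ρ ^ (r iq) by positivity)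
            calc ρ ^ (r iq) * (P (C + t) * ρ ^ (r e'))
                = (P (C + t) * ρ ^ (r iq)) * ρ ^ (r e') := by ring
              _ ≤ (P (r iq) * ρ ^ (C + t)) * ρ ^ (r e') :=
                  mul_le_mul_of_nonneg_right A (by positivity)
              _ = (P (r iq) * ρ ^ (r e')) * ρ ^ (C + t) := by ring
              _ ≤ (P (r e') * ρ ^ (r iq)) * ρ ^ (C + t) :=
                  mul_le_mul_of_nonneg_right Cc (by positivity)
              _ = ρ ^ (r iq) * (P (r e') * ρ ^ (C + t)) := by ring
          calc P B' * ρ ^ (r e') * Φ ^ D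
              = (P B' * Φ ^ D) * ρ ^ (r e') := by ring
            _ ≤ (P (C + t) * ρ ^ D * ρ ^ m) * ρ ^ (r e') :=
                mul_le_mul_of_nonneg_right B (by positivity)
            _ = (P (C + t) * ρ ^ (r e')) * (ρ ^ D * ρ ^ m) := by ring
            _ ≤ (P (r e') * ρ ^ (C + t)) * (ρ ^ D * ρ ^ m) :=
                mul_le_mul_of_nonneg_right hAC (by positivity)
            _ = P (r e') * (ρ ^ (C + t) * ρ ^ m) * ρ ^ D := by ring
            _ = P (r e') * ρ ^ B' * ρ ^ D := by
                rw [← pow_add]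
        exact ⟨e', B', by omega, h02, hCnext, he'1, o5, o6⟩

end Machine2

end QHS

namespace QHS

/-- level-up helper for upper-bound lines -/
lemma line_up {x y σ τ : ℝ} (hy : 0 ≤ y) (hσ : 0 < σ) (hστ : σ ≤ τ)
    {u v : ℕ} (huv : u ≤ v) (h : x * σ ^ u ≤ y * σ ^ v) : x * τ ^ u ≤ y * τ ^ v := by
  have hτ : 0 < τ := lt_of_lt_of_le hσ hστ
  have h1 : x ≤ y * σ ^ (v - u) := by
    apply cancel_left (show (0:ℝ) < σ ^ u by positivity)
    calc σ ^ u * x = x * σ ^ u := by ring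
      _ ≤ y * σ ^ v := h
      _ = σ ^ u * (y * σ ^ (v - u)) := by
          rw [show y * σ ^ v = y * (σ ^ (v - u) * σ ^ u) by rw [pow_sub_mul_pow σ huv]]
          ring
  have h2 : σ ^ (v - u) ≤ τ ^ (v - u) := pow_le_pow_left₀ hσ.le hστ _
  calc x * τ ^ u ≤ y * σ ^ (v - u) * τ ^ u :=
        mul_le_mul_of_nonneg_right h1 (by positivity)
    _ ≤ y * τ ^ (v - u) * τ ^ u := by
        apply mul_le_mul_of_nonneg_right (mul_le_mul_of_nonneg_left h2 hy) (by positivity)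
    _ = y * τ ^ v := by rw [mul_assoc, pow_sub_mul_pow τ huv]

section Machine3

variable {P : ℕ → ℝ} {ρ Φ μ lam₂ lam₃ : ℝ}
variable (hp : ∀ n, 1 ≤ P n) (hρ0 : 0 < ρ) (hρ1 : ρ < 1)

local notation "r" => rc hp hρ0 hρ1

/-- block estimate (A): the `lam₃`-cone, from the density condition -/
lemma blockA (hΦ1 : 1 ≤ Φ) (hgrow : ∀ n, P (n + 1) ≤ P n * Φ) (h3 : ρ < lam₃)
    (e e' : ℕ) (hee' : e ≤ e')
    (hden : ∀ i, e < i → i ≤ e' → (Φ/ρ) ^ (i - e) ≤ (lam₃/ρ) ^ (r i - r e)) :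
    ∀ k, r e ≤ k → k ≤ r e' → P k * lam₃ ^ (r e) ≤ P (r e) * lam₃ ^ k := by
  intro k hk1 hk2
  have hΦ0 : (0:ℝ) < Φ := lt_of_lt_of_le one_pos hΦ1
  have h30 : (0:ℝ) < lam₃ := lt_trans hρ0 h3
  have hk0 : 1 ≤ k := by
    have := rc_ge hp hρ0 hρ1 e; omega
  obtain ⟨j, hj1, hj2, hj3⟩ := last_rec hp hρ0 hρ1 (k := k) hk0
  have hej : e ≤ j := hj3 e hk1
  have hje' : j ≤ e' := by
    by_contra h
    push_neg at h
    have := rc_mono hp hρ0 hρ1 h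
    omega
  -- P k * ρ^(r e) * ρ^(j-e) ≤ P (r e) * ρ^k * Φ^(j-e)
  have hA := rc_interior hp hρ0 hρ1 j hj1 (by omega)
  have hR5 := rc_climb hp hρ0 hρ1 hΦ0 hgrow e j hej
  have hPk := hP0 hp k
  have hPj := hP0 hp (r j)
  have hPe := hP0 hp (r e)
  have key : P k * ρ ^ (r e) * ρ ^ (j - e) ≤ P (r e) * ρ ^ k * Φ ^ (j - e) := by
    apply cancel_left (show (0:ℝ) < P (r j) * ρ ^ (r j) by positivity)
    calc P (r j) * ρ ^ (r j) * (P k * ρ ^ (r e) * ρ ^ (j - e))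
        = (P k * ρ ^ (r j)) * (P (r j) * ρ ^ (r e) * ρ ^ (j - e)) := by ring
      _ ≤ (P (r j) * ρ ^ k) * (P (r e) * ρ ^ (r j) * Φ ^ (j - e)) := by
          apply mul_le_mul hA hR5 (by positivity) (by positivity)
      _ = P (r j) * ρ ^ (r j) * (P (r e) * ρ ^ k * Φ ^ (j - e)) := by ring
  -- replace Φ^(j-e) by ρ^(j-e) * (Φ/ρ)^(j-e) and cancel
  have key2 : P k * ρ ^ (r e) ≤ P (r e) * ρ ^ k * (Φ/ρ) ^ (j - e) := by
    apply cancel_left (show (0:ℝ) < ρ ^ (j - e) by positivity)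
    calc ρ ^ (j - e) * (P k * ρ ^ (r e))
        = P k * ρ ^ (r e) * ρ ^ (j - e) := by ring
      _ ≤ P (r e) * ρ ^ k * Φ ^ (j - e) := key
      _ = ρ ^ (j - e) * (P (r e) * ρ ^ k * (Φ/ρ) ^ (j - e)) := by
          have h1 : ρ ^ (j - e) * (Φ/ρ) ^ (j - e) = Φ ^ (j - e) := by
            rw [← mul_pow]; congr 1; field_simp
          calc P (r e) * ρ ^ k * Φ ^ (j - e)
              = P (r e) * ρ ^ k * (ρ ^ (j - e) * (Φ/ρ) ^ (j - e)) := by rw [h1]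
            _ = ρ ^ (j - e) * (P (r e) * ρ ^ k * (Φ/ρ) ^ (j - e)) := by ring
  -- density
  have hden2 : (Φ/ρ) ^ (j - e) ≤ (lam₃/ρ) ^ (k - r e) := by
    rcases eq_or_lt_of_le hej with h | h
    · subst h
      simp only [Nat.sub_self, pow_zero]
      have hb : (1:ℝ) ≤ lam₃/ρ := by rw [le_div_iff₀ hρ0]; linarith
      simpa using pow_le_pow_right₀ hb (Nat.zero_le (k - r e))
    · calc (Φ/ρ) ^ (j - e) ≤ (lam₃/ρ) ^ (r j - r e) := hden j h hje'
        _ ≤ (lam₃/ρ) ^ (k - r e) := by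
            apply pow_le_pow_right₀
            · rw [le_div_iff₀ hρ0]; linarith
            · have := rc_mono hp hρ0 hρ1
              have hle : r e ≤ r j := (rc_mono hp hρ0 hρ1).le_iff_le.2 hej
              omega
  have key3 : P k * ρ ^ (r e) ≤ P (r e) * ρ ^ k * (lam₃/ρ) ^ (k - r e) := by
    calc P k * ρ ^ (r e) ≤ P (r e) * ρ ^ k * (Φ/ρ) ^ (j - e) := key2
      _ ≤ P (r e) * ρ ^ k * (lam₃/ρ) ^ (k - r e) := by
          apply mul_le_mul_of_nonneg_left hden2 (by positivity)
  -- convert to the lam₃-line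
  have hexp : ρ ^ k * (lam₃/ρ) ^ (k - r e) = ρ ^ (r e) * lam₃ ^ (k - r e) := by
    have h1 : ρ ^ (k - r e) * (lam₃ / ρ) ^ (k - r e) = lam₃ ^ (k - r e) := by
      rw [← mul_pow]; congr 1; field_simp
    calc ρ ^ k * (lam₃/ρ) ^ (k - r e)
        = (ρ ^ (k - r e) * ρ ^ (r e)) * (lam₃/ρ) ^ (k - r e) := by
          rw [pow_sub_mul_pow ρ hk1]
      _ = ρ ^ (r e) * (ρ ^ (k - r e) * (lam₃/ρ) ^ (k - r e)) := by ring
      _ = ρ ^ (r e) * lam₃ ^ (k - r e) := by rw [h1]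
  have key4 : P k * ρ ^ (r e) ≤ P (r e) * (ρ ^ (r e) * lam₃ ^ (k - r e)) := by
    calc P k * ρ ^ (r e) ≤ P (r e) * ρ ^ k * (lam₃/ρ) ^ (k - r e) := key3
      _ = P (r e) * (ρ ^ k * (lam₃/ρ) ^ (k - r e)) := by ring
      _ = P (r e) * (ρ ^ (r e) * lam₃ ^ (k - r e)) := by rw [hexp]
  apply cancel_left (show (0:ℝ) < ρ ^ (r e) by positivity)
  calc ρ ^ (r e) * (P k * lam₃ ^ (r e))
      = (P k * ρ ^ (r e)) * lam₃ ^ (r e) := by ring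
    _ ≤ (P (r e) * (ρ ^ (r e) * lam₃ ^ (k - r e))) * lam₃ ^ (r e) := by
        apply mul_le_mul_of_nonneg_right key4 (by positivity)
    _ = ρ ^ (r e) * (P (r e) * (lam₃ ^ (k - r e) * lam₃ ^ (r e))) := by ring
    _ = ρ ^ (r e) * (P (r e) * lam₃ ^ k) := by rw [pow_sub_mul_pow lam₃ hk1]

/-- block estimate (B): backward `lam₂`-domination at record times -/
lemma blockB (h2 : 0 < lam₂) (h2ρ : lam₂ ≤ ρ) (e e' : ℕ) :
    ∀ m, 1 ≤ m → m < r e' → P m * lam₂ ^ (r e') ≤ P (r e') * lam₂ ^ m := by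
  intro m hm1 hm2
  obtain ⟨j, hj1, hj2, hj3⟩ := last_rec hp hρ0 hρ1 (k := m) hm1
  have hje' : j ≤ e' := by
    by_contra h
    push_neg at h
    have := rc_mono hp hρ0 hρ1 h
    omega
  have hA := rc_interior hp hρ0 hρ1 j hj1 hj2
  have hCc := rc_comp hp hρ0 hρ1 j e' hje'
  have hPm := hP0 hp m
  have hPj := hP0 hp (r j)
  have hPe' := hP0 hp (r e')
  have key : P m * ρ ^ (r e') ≤ P (r e') * ρ ^ m := by
    apply cancel_left (show (0:ℝ) < P (r j) * ρ ^ (r j) by positivity)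
    calc P (r j) * ρ ^ (r j) * (P m * ρ ^ (r e'))
        = (P m * ρ ^ (r j)) * (P (r j) * ρ ^ (r e')) := by ring
      _ ≤ (P (r j) * ρ ^ m) * (P (r e') * ρ ^ (r j)) := by
          apply mul_le_mul hA hCc (by positivity) (by positivity)
      _ = P (r j) * ρ ^ (r j) * (P (r e') * ρ ^ m) := by ring
  exact line_down hPm.le hPe'.le h2 h2ρ (by omega : m ≤ r e') key

end Machine3

end QHS

namespace QHS

section Machine4

variable {P : ℕ → ℝ} {ρ Φ μ lam₃ : ℝ}
variable (hp : ∀ n, 1 ≤ P n) (hρ0 : 0 < ρ) (hρ1 : ρ < 1)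

local notation "r" => rc hp hρ0 hρ1

/-- The cascade: builds a chain of `p+1` record indices, each dominating the next
block in the density sense. -/
lemma build (hΦ1 : 1 ≤ Φ) (hgrow : ∀ n, P (n + 1) ≤ P n * Φ)
    (hμ0 : 0 < μ) (hμρ : μ ≤ ρ) (h3 : ρ < lam₃)
    (vD vE : ℕ → ℕ)
    (hv1 : ∀ n, ∀ q : ℕ, ∃ t m : ℕ, 1 ≤ m ∧ t + m ≤ vE n ∧
      P (q + t + m) * Φ ^ (vD n) < P (q + t) * ρ ^ (vD n) * μ ^ m)
    (hv2 : ∀ n, (Φ/ρ) ^ (vE n + 1) ≤ (lam₃/ρ) ^ (vD (n + 1))) :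
    ∀ p e C, r e ≤ C →
      (∀ s, r e ≤ s → s ≤ C → P s * ρ ^ (r e) ≤ P (r e) * ρ ^ s) →
      (P C * ρ ^ (r e) * Φ ^ (vD (p + 1)) ≤ P (r e) * ρ ^ C * ρ ^ (vD (p + 1))) →
      ∃ g : ℕ → ℕ, g 0 = e ∧
        ∀ i, i < p → g i < g (i + 1) ∧
          (∀ i', g i < i' → i' ≤ g (i + 1) →
            (Φ/ρ) ^ (i' - g i) ≤ (lam₃/ρ) ^ (r i' - r (g i))) := by
  intro p
  induction p with
  | zero =>
      intro e C h1 h2 h3'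
      exact ⟨fun _ => e, rfl, fun i hi => absurd hi (by omega)⟩
  | succ p IH =>
      intro e C hrC hUB hDIP
      -- extend the line bound through the protected stretch
      have hUBext := ext_ub hp hρ0 hρ1 hΦ1 hgrow e C (vD (p + 2)) hrC hUB hDIP
      -- run the loop at level p+1
      obtain ⟨e', B', o1, o2, o3, o4, o5, o6⟩ :=
        loop hp hρ0 hρ1 hΦ1 hgrow hμ0 hμρ (vE (p + 1)) (vD (p + 1)) (hv1 (p + 1))
          (r (e + 1)) e (C + vD (p + 2)) (by omega) hUBext
          (by omega)
      -- density of the block (e, e')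
      have hden : ∀ i', e < i' → i' ≤ e' →
          (Φ/ρ) ^ (i' - e) ≤ (lam₃/ρ) ^ (r i' - r e) := by
        intro i' h1 h2
        have hΦρ : (1:ℝ) ≤ Φ/ρ := by
          rw [le_div_iff₀ hρ0]; linarith
        have h3ρ : (1:ℝ) ≤ lam₃/ρ := by
          rw [le_div_iff₀ hρ0]; linarith
        have hcount : i' - e ≤ vE (p + 1) := by omega
        have hpos : vD (p + 2) ≤ r i' - r e := by
          -- r i' ≥ r (e+1) > C + vD (p+2) ≥ r e + vD (p+2)
          have hmono : r (e + 1) ≤ r i' := (rc_mono hp hρ0 hρ1).le_iff_le.2 (by omega)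
          omega
        calc (Φ/ρ) ^ (i' - e) ≤ (Φ/ρ) ^ (vE (p + 1) + 1) :=
              pow_le_pow_right₀ hΦρ (by omega)
          _ ≤ (lam₃/ρ) ^ (vD (p + 2)) := hv2 (p + 1)
          _ ≤ (lam₃/ρ) ^ (r i' - r e) := pow_le_pow_right₀ h3ρ hpos
      -- recurse
      obtain ⟨g, hg0, hg⟩ := IH e' B' o4 o5 o6
      refine ⟨fun n => Nat.rec e (fun k _ => g k) n, rfl, ?_⟩
      intro i hi
      match i with
      | 0 =>
          constructor
          · show e < g 0
            rw [hg0]; exact o1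
          · show ∀ i', e < i' → i' ≤ g 0 → _
            rw [hg0]
            exact hden
      | (i + 1) =>
          have := hg i (by omega)
          exact this

end Machine4

end QHS


open QHS in
/-- **Quasi-hyperbolic strings from the sifting lemma.** -/
theorem quasi_hyperbolic_strings {X : Type*} [MetricSpace X] [CompactSpace X]
    (f : X → X) (hf : Continuous f)
    (φ ψ : X → ℝ) (hφc : Continuous φ) (hψc : Continuous ψ)
    (hφ : ∀ x, 0 < φ x) (hψ : ∀ x, 0 < ψ x)
    (lam : ℝ) (hlam₀ : 0 < lam) (hlam₁ : lam < 1)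
    (hdom : ∀ x : X, φ x * ψ (f x) ≤ lam)
    (b : X) (hb : ∀ n : ℕ, 1 ≤ n → 1 ≤ ∏ k ∈ Finset.range n, φ (f^[k] b))
    (lam₁ lam₂ : ℝ) (h01 : lam < lam₁) (h12 : lam₁ < lam₂) (h21 : lam₂ < 1)
    (tilde : ∀ x : X,
      (∀ n : ℕ, 1 ≤ n → lam₂ ^ n ≤ ∏ k ∈ Finset.range n, φ (f^[k] x)) →
      ∃ c ∈ omegaSet f x,
        ∀ n : ℕ, 1 ≤ n → ∏ k ∈ Finset.range n, φ (f^[k] c) ≤ lam₁ ^ n)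
    (lam₃ : ℝ) (h23 : lam₂ < lam₃) (h31 : lam₃ < 1) (l : ℕ) :
    ∃ n : ℕ → ℕ, StrictMono n ∧ 0 < n 0 ∧
      ∀ j : ℕ, j + 1 < l → ∀ k : ℕ, n j + 1 ≤ k → k ≤ n (j + 1) →
        (∏ i ∈ Finset.Icc (n j) (k - 1), φ (f^[i] b)) ≤ lam₃ ^ (k - n j) ∧
        (∏ i ∈ Finset.Icc (k - 1) (n (j + 1) - 1), ψ (f^[i + 1] b)) ≤
          (lam / lam₂) ^ (n (j + 1) - k + 1) := by
  classical
  rcases le_or_gt l 1 with hl | hl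
  · refine ⟨fun j => j + 1, fun a b' h => ?_, ?_, fun j hj => absurd hj (by omega)⟩
    · show a + 1 < b' + 1
      omega
    · show 0 < 0 + 1
      omega
  set p := l - 1 with hpdef
  have hlam₁p : 0 < lam₁ := by linarith
  have hlam₂p : 0 < lam₂ := by linarith
  set μ := lam₂ + (lam₃ - lam₂)/4 with hμdef
  set ρ := lam₂ + (lam₃ - lam₂)/2 with hρdef
  have h2μ : lam₂ < μ := by rw [hμdef]; linarith
  have hμρ : μ ≤ ρ := by rw [hμdef, hρdef]; linarith
  have hρ0 : 0 < ρ := by rw [hρdef]; linarith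
  have hρ3 : ρ < lam₃ := by rw [hρdef]; linarith
  have hρ1 : ρ < 1 := by linarith
  have hμ0 : 0 < μ := by linarith
  have h2ρ : lam₂ ≤ ρ := by rw [hρdef]; linarith
  -- uniform bound for φ
  obtain ⟨x₀, -, hx₀⟩ := isCompact_univ.exists_isMaxOn ⟨b, trivial⟩ hφc.continuousOn
  set Φ := max (φ x₀) 1 with hΦdef
  have hΦ1 : (1:ℝ) ≤ Φ := le_max_right _ _
  have hφΦ : ∀ y, φ y ≤ Φ := fun y => le_trans (hx₀ (Set.mem_univ y)) (le_max_left _ _)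
  have hΦ0 : (0:ℝ) < Φ := by linarith
  -- the orbit products
  set P : ℕ → ℝ := fun n => ∏ k ∈ Finset.range n, φ (f^[k] b) with hPdef
  have hPw : ∀ n, P n = QHS.win f φ b 0 n := by
    intro n
    simp only [hPdef]
    unfold QHS.win
    exact (Finset.prod_congr rfl fun k _ => by rw [Nat.zero_add]).symm
  have hp1 : ∀ n, 1 ≤ P n := by
    intro n
    rcases Nat.eq_zero_or_pos n with h | h
    · subst h; simp [hPdef]
    · exact hb n h
  have hPpos : ∀ n, 0 < P n := fun n => lt_of_lt_of_le one_pos (hp1 n)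
  have hgrow : ∀ n, P (n + 1) ≤ P n * Φ := by
    intro n
    have h : P (n + 1) = P n * φ (f^[n] b) := by
      simp only [hPdef]
      exact Finset.prod_range_succ _ n
    rw [h]
    exact mul_le_mul_of_nonneg_left (hφΦ _) (le_of_lt (hPpos n))
  have hwin_split : ∀ u m : ℕ, P (u + m) = P u * QHS.win f φ b u m := by
    intro u m
    have h := QHS.win_comp f φ b 0 u m
    rw [Nat.zero_add] at h
    rw [hPw (u + m), hPw u]
    exact h
  -- dips at every deficit level
  have hEx : ∀ D : ℕ, ∃ E : ℕ, ∀ q : ℕ, ∃ t m : ℕ, 1 ≤ m ∧ t + m ≤ E ∧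
      P (q + t + m) * Φ ^ D < P (q + t) * ρ ^ D * μ ^ m := by
    intro D
    obtain ⟨E, hE⟩ := QHS.dip f hf φ hφc hφ lam₁ lam₂ μ hlam₁p h12 h2μ tilde
      ((ρ/Φ) ^ D) (by positivity)
    refine ⟨E, fun q => ?_⟩
    obtain ⟨t, m, h1, h2, h3⟩ := hE (f^[q] b)
    refine ⟨t, m, h1, h2, ?_⟩
    rw [QHS.win_shift] at h3
    have h4 : P (q + t + m) < P (q + t) * ((ρ/Φ) ^ D * μ ^ m) := by
      rw [hwin_split (q + t) m]
      exact mul_lt_mul_of_pos_left h3 (hPpos (q + t))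
    have h5 : P (q + t + m) * Φ ^ D < P (q + t) * ((ρ/Φ) ^ D * μ ^ m) * Φ ^ D :=
      mul_lt_mul_of_pos_right h4 (by positivity)
    have h6 : P (q + t) * ((ρ/Φ) ^ D * μ ^ m) * Φ ^ D = P (q + t) * ρ ^ D * μ ^ m := by
      rw [div_pow]
      field_simp
    rwa [h6] at h5
  choose Efun hEfun using hEx
  have hDx : ∀ W : ℕ, ∃ D : ℕ, (Φ/ρ) ^ (W + 1) ≤ (lam₃/ρ) ^ D := by
    intro W
    obtain ⟨D, hD⟩ := pow_unbounded_of_one_lt ((Φ/ρ) ^ (W + 1))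
      (show (1:ℝ) < lam₃/ρ by rw [lt_div_iff₀ hρ0]; linarith)
    exact ⟨D, le_of_lt hD⟩
  choose Dfun hDfun using hDx
  set vD : ℕ → ℕ := fun n => Nat.rec (motive := fun _ => ℕ) (Dfun 0)
    (fun _ prev => Dfun (Efun prev)) n with hvDdef
  set vE : ℕ → ℕ := fun n => Efun (vD n) with hvEdef
  have hv1 : ∀ n q, ∃ t m : ℕ, 1 ≤ m ∧ t + m ≤ vE n ∧
      P (q + t + m) * Φ ^ (vD n) < P (q + t) * ρ ^ (vD n) * μ ^ m :=
    fun n q => hEfun (vD n) q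
  have hv2 : ∀ n, (Φ/ρ) ^ (vE n + 1) ≤ (lam₃/ρ) ^ (vD (n + 1)) := by
    intro n
    have hstep : vD (n + 1) = Dfun (Efun (vD n)) := rfl
    have hE' : vE n = Efun (vD n) := rfl
    rw [hstep, hE']
    exact hDfun (Efun (vD n))
  -- initial loop run
  have hUB0 : ∀ s, QHS.rc hp1 hρ0 hρ1 0 ≤ s → s ≤ QHS.rc hp1 hρ0 hρ1 0 →
      P s * ρ ^ (QHS.rc hp1 hρ0 hρ1 0) ≤ P (QHS.rc hp1 hρ0 hρ1 0) * ρ ^ s := by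
    intro s h1 h2
    have h3 : s = QHS.rc hp1 hρ0 hρ1 0 := le_antisymm h2 h1
    rw [h3]
  obtain ⟨e₁, B₁, i1, i2, i3, i4, i5, i6⟩ :=
    QHS.loop hp1 hρ0 hρ1 hΦ1 hgrow hμ0 hμρ (vE (p + 1)) (vD (p + 1)) (hv1 (p + 1))
      (QHS.rc hp1 hρ0 hρ1 1) 0 (QHS.rc hp1 hρ0 hρ1 0) le_rfl hUB0
      (by simp only [Nat.zero_add]; omega)
  -- cascade
  obtain ⟨g, hg0, hgall⟩ :=
    QHS.build hp1 hρ0 hρ1 hΦ1 hgrow hμ0 hμρ hρ3 vD vE hv1 hv2 p e₁ B₁ i4 i5 i6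
  have hgstep : ∀ i, i < p → g i < g (i + 1) := fun i hi => (hgall i hi).1
  have hgmono : ∀ i j, i ≤ j → j ≤ p → g i ≤ g j := by
    intro i j hij hjp
    induction j with
    | zero =>
        have h0 : i = 0 := by omega
        rw [h0]
    | succ j ih =>
        rcases Nat.lt_or_ge i (j + 1) with h | h
        · have h1 := hgstep j (by omega)
          have h2 := ih (by omega) (by omega)
          omega
        · have : i = j + 1 := by omega
          rw [this]

  -- the chain of times
  have hrmono : StrictMono (QHS.rc hp1 hρ0 hρ1) := QHS.rc_mono hp1 hρ0 hρ1
  have hrge : ∀ i, i + 1 ≤ QHS.rc hp1 hρ0 hρ1 i := QHS.rc_ge hp1 hρ0 hρ1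
  refine ⟨fun j => if j < l then QHS.rc hp1 hρ0 hρ1 (g j)
    else QHS.rc hp1 hρ0 hρ1 (g (l - 1)) + (j + 1 - l), ?_, ?_, ?_⟩
  · -- StrictMono
    apply strictMono_nat_of_lt_succ
    intro j
    by_cases h1 : j + 1 < l
    · have h2 : j < l := by omega
      simp only [if_pos h1, if_pos h2]
      exact hrmono (hgstep j (by omega))
    · by_cases h2 : j < l
      · have h3 : j = l - 1 := by omega
        simp only [if_pos h2, if_neg h1]
        rw [h3]
        omega
      · simp only [if_neg h1, if_neg h2]
        omega
  · -- positivity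
    have h2 : 0 < l := by omega
    simp only [if_pos h2]
    have := hrge (g 0)
    omega
  · intro j hj k hk1 hk2
    have hjp : j < p := by omega
    have hjl : j < l := by omega
    have hj1l : j + 1 < l := hj
    simp only [if_pos hjl, if_pos hj1l] at hk1 hk2 ⊢
    have hden := (hgall j hjp).2
    have HA := QHS.blockA hp1 hρ0 hρ1 hΦ1 hgrow hρ3 (g j) (g (j + 1))
      (le_of_lt (hgstep j hjp)) hden
    have HB := QHS.blockB hp1 hρ0 hρ1 hlam₂p h2ρ (g j) (g (j + 1))
    have hlam₃0 : (0:ℝ) < lam₃ := by linarith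
    have hrj1 : 1 ≤ QHS.rc hp1 hρ0 hρ1 (g j) := by have := hrge (g j); omega
    have hrj1' : 1 ≤ QHS.rc hp1 hρ0 hρ1 (g (j + 1)) := by have := hrge (g (j + 1)); omega
    have hrjj : QHS.rc hp1 hρ0 hρ1 (g j) < QHS.rc hp1 hρ0 hρ1 (g (j + 1)) :=
      hrmono (hgstep j hjp)
    constructor
    · -- (A): the lam₃-cone
      have hIcc : Finset.Icc (QHS.rc hp1 hρ0 hρ1 (g j)) (k - 1)
          = Finset.Ico (QHS.rc hp1 hρ0 hρ1 (g j)) k := by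
        rw [← Finset.Ico_add_one_right_eq_Icc]
        congr 1
        omega
      have hsplit2 : P (QHS.rc hp1 hρ0 hρ1 (g j)) *
          ∏ i ∈ Finset.Ico (QHS.rc hp1 hρ0 hρ1 (g j)) k, φ (f^[i] b) = P k := by
        simp only [hPdef]
        exact Finset.prod_range_mul_prod_Ico _ (by omega)
      have hA := HA k (by omega) hk2
      have hA2 : P k ≤ P (QHS.rc hp1 hρ0 hρ1 (g j))
          * lam₃ ^ (k - QHS.rc hp1 hρ0 hρ1 (g j)) := by
        apply QHS.cancel_left (show (0:ℝ) < lam₃ ^ (QHS.rc hp1 hρ0 hρ1 (g j)) by positivity)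
        calc lam₃ ^ (QHS.rc hp1 hρ0 hρ1 (g j)) * P k
            = P k * lam₃ ^ (QHS.rc hp1 hρ0 hρ1 (g j)) := by ring
          _ ≤ P (QHS.rc hp1 hρ0 hρ1 (g j)) * lam₃ ^ k := hA
          _ = lam₃ ^ (QHS.rc hp1 hρ0 hρ1 (g j)) * (P (QHS.rc hp1 hρ0 hρ1 (g j))
              * lam₃ ^ (k - QHS.rc hp1 hρ0 hρ1 (g j))) := by
              rw [show lam₃ ^ k = lam₃ ^ (k - QHS.rc hp1 hρ0 hρ1 (g j))
                  * lam₃ ^ (QHS.rc hp1 hρ0 hρ1 (g j)) from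
                (pow_sub_mul_pow lam₃ (by omega : QHS.rc hp1 hρ0 hρ1 (g j) ≤ k)).symm]
              ring
      rw [hIcc]
      apply QHS.cancel_left (hPpos (QHS.rc hp1 hρ0 hρ1 (g j)))
      rw [hsplit2]
      exact hA2
    · -- (B): the ψ-products
      have hψa : ∀ i : ℕ, ψ (f^[i + 1] b) ≤ lam / φ (f^[i] b) := by
        intro i
        have h := hdom (f^[i] b)
        rw [← Function.iterate_succ_apply' f i b] at h
        rw [le_div_iff₀ (hφ _)]
        rw [mul_comm]
        exact h
      have hprod1 : (∏ i ∈ Finset.Icc (k - 1) (QHS.rc hp1 hρ0 hρ1 (g (j + 1)) - 1),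
            ψ (f^[i + 1] b)) ≤
          ∏ i ∈ Finset.Icc (k - 1) (QHS.rc hp1 hρ0 hρ1 (g (j + 1)) - 1),
            (lam / φ (f^[i] b)) :=
        Finset.prod_le_prod (fun i _ => (hψ _).le) (fun i _ => hψa i)
      have hcard : (Finset.Icc (k - 1) (QHS.rc hp1 hρ0 hρ1 (g (j + 1)) - 1)).card
          = QHS.rc hp1 hρ0 hρ1 (g (j + 1)) - k + 1 := by
        rw [Nat.card_Icc]
        omega
      have hprod2 : (∏ i ∈ Finset.Icc (k - 1) (QHS.rc hp1 hρ0 hρ1 (g (j + 1)) - 1),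
            (lam / φ (f^[i] b))) =
          lam ^ (QHS.rc hp1 hρ0 hρ1 (g (j + 1)) - k + 1) /
          ∏ i ∈ Finset.Icc (k - 1) (QHS.rc hp1 hρ0 hρ1 (g (j + 1)) - 1), φ (f^[i] b) := by
        rw [Finset.prod_div_distrib, Finset.prod_const, hcard]
      have hIcc2 : Finset.Icc (k - 1) (QHS.rc hp1 hρ0 hρ1 (g (j + 1)) - 1)
          = Finset.Ico (k - 1) (QHS.rc hp1 hρ0 hρ1 (g (j + 1))) := by
        rw [← Finset.Ico_add_one_right_eq_Icc]
        congr 1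
        omega
      have hsplit3 : P (k - 1) * ∏ i ∈ Finset.Ico (k - 1) (QHS.rc hp1 hρ0 hρ1 (g (j + 1))),
          φ (f^[i] b) = P (QHS.rc hp1 hρ0 hρ1 (g (j + 1))) := by
        simp only [hPdef]
        exact Finset.prod_range_mul_prod_Ico _ (by omega)
      have hBB := HB (k - 1) (by omega) (by omega)
      have hlow : lam₂ ^ (QHS.rc hp1 hρ0 hρ1 (g (j + 1)) - k + 1) ≤
          ∏ i ∈ Finset.Ico (k - 1) (QHS.rc hp1 hρ0 hρ1 (g (j + 1))), φ (f^[i] b) := by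
        apply QHS.cancel_left (hPpos (k - 1))
        rw [hsplit3]
        apply QHS.cancel_left (show (0:ℝ) < lam₂ ^ (k - 1) by positivity)
        calc lam₂ ^ (k - 1) * (P (k - 1)
              * lam₂ ^ (QHS.rc hp1 hρ0 hρ1 (g (j + 1)) - k + 1))
            = P (k - 1) * (lam₂ ^ (QHS.rc hp1 hρ0 hρ1 (g (j + 1)) - k + 1)
              * lam₂ ^ (k - 1)) := by ring
          _ = P (k - 1) * lam₂ ^ (QHS.rc hp1 hρ0 hρ1 (g (j + 1))) := by
              rw [← pow_add]
              congr 2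
              omega
          _ ≤ P (QHS.rc hp1 hρ0 hρ1 (g (j + 1))) * lam₂ ^ (k - 1) := hBB
          _ = lam₂ ^ (k - 1) * P (QHS.rc hp1 hρ0 hρ1 (g (j + 1))) := by ring
      have hprodpos : (0:ℝ) < ∏ i ∈ Finset.Ico (k - 1) (QHS.rc hp1 hρ0 hρ1 (g (j + 1))),
          φ (f^[i] b) := Finset.prod_pos fun i _ => hφ _
      calc (∏ i ∈ Finset.Icc (k - 1) (QHS.rc hp1 hρ0 hρ1 (g (j + 1)) - 1), ψ (f^[i + 1] b))
          ≤ lam ^ (QHS.rc hp1 hρ0 hρ1 (g (j + 1)) - k + 1) /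
            ∏ i ∈ Finset.Icc (k - 1) (QHS.rc hp1 hρ0 hρ1 (g (j + 1)) - 1), φ (f^[i] b) := by
            rw [← hprod2]
            exact hprod1
        _ ≤ lam ^ (QHS.rc hp1 hρ0 hρ1 (g (j + 1)) - k + 1) /
            lam₂ ^ (QHS.rc hp1 hρ0 hρ1 (g (j + 1)) - k + 1) := by
            rw [hIcc2]
            apply div_le_div_of_nonneg_left (by positivity) (pow_pos hlam₂p _) hlow
        _ = (lam / lam₂) ^ (QHS.rc hp1 hρ0 hρ1 (g (j + 1)) - k + 1) := by
            rw [div_pow]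
end
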